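/- arXiv:1411.1305 — 4 statements merged into one kernel-verified Lean document; each statement's English description precedes it below -/
import Mathlib

section
/- Let A be a simplicial real central hyperplane arrangement with fundamental chamber c₀, and let I ⊆ A be 2-closed. If I contains all walls of c₀, then I = A. -/
open Matrix
open scoped Classical

/-- Ambient space: `ℝⁿ`. -/
abbrev V (n : ℕ) := Fin n → ℝ

/-- The linear functional `x ↦ v ⬝ᵥ x` determined by a normal vector. -/
def hypl {n : ℕ} (v : V n) : V n →ₗ[ℝ] ℝ where
  toFun x := v ⬝ᵥ x
  map_add' x y := by simp [dotProduct_add]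
  map_smul' c x := by simp [dotProduct_smul]

/-- Two normal vectors define the same hyperplane. -/
def SameHyp {n : ℕ} (u w : V n) : Prop := ∀ x, u ⬝ᵥ x = 0 ↔ w ⬝ᵥ x = 0

/-- A finite set of normal vectors represents a (central) hyperplane arrangement
if each normal is nonzero and distinct normals define distinct hyperplanes. -/
def IsArrangement {n : ℕ} (A : Finset (V n)) : Prop :=
  (∀ v ∈ A, v ≠ 0) ∧ ∀ u ∈ A, ∀ w ∈ A, SameHyp u w → u = w

/-- The point `x` realizes the sign vector `c` on the arrangement `A`. -/
def Realizes {n : ℕ} (A : Finset (V n)) (c : V n → Bool) (x : V n) : Prop :=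
  ∀ v ∈ A, if c v then 0 < v ⬝ᵥ x else v ⬝ᵥ x < 0

/-- A chamber of `A`, encoded by its sign vector. -/
def IsChamber {n : ℕ} (A : Finset (V n)) (c : V n → Bool) : Prop :=
  ∃ x, Realizes A c x

/-- The separation set of two chambers: hyperplanes on which their signs differ. -/
noncomputable def SepSet {n : ℕ} (A : Finset (V n)) (c d : V n → Bool) : Finset (V n) :=
  A.filter (fun v => c v ≠ d v)

/-- The localization of `A` at the subspace `ker u ∩ ker w`:
hyperplanes containing this subspace. -/
noncomputable def loc {n : ℕ} (A : Finset (V n)) (u w : V n) : Finset (V n) :=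
  A.filter (fun v => ∀ x, u ⬝ᵥ x = 0 → w ⬝ᵥ x = 0 → v ⬝ᵥ x = 0)

/-- `u, w` span a codimension-2 intersection subspace `ker u ∩ ker w` of `A`. -/
def Codim2 {n : ℕ} (A : Finset (V n)) (u w : V n) : Prop :=
  u ∈ A ∧ w ∈ A ∧ LinearIndependent ℝ ![u, w]

/-- `I` is biclosed w.r.t. the chamber `c₀`: its intersection with each rank-2
localization is the separation set of some chamber of the localization. -/
def IsBiclosed {n : ℕ} (A : Finset (V n)) (c₀ : V n → Bool) (I : Finset (V n)) : Prop :=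
  ∀ u w, Codim2 A u w →
    ∃ d, IsChamber (loc A u w) d ∧ I ∩ loc A u w = SepSet (loc A u w) c₀ d

/-- `I ⊆ A` is convex with respect to `c₀`. -/
def IsConvex {n : ℕ} (A : Finset (V n)) (c₀ : V n → Bool) (I : Finset (V n)) : Prop :=
  ∀ H ∈ A \ I, ∃ e, IsChamber A e ∧ H ∈ SepSet A c₀ e ∧ SepSet A c₀ e ⊆ A \ I

/-- `I` is 2-closed: its intersection with each rank-2 localization is convex there. -/
def Is2Closed {n : ℕ} (A : Finset (V n)) (c₀ : V n → Bool) (I : Finset (V n)) : Prop :=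
  ∀ u w, Codim2 A u w → IsConvex (loc A u w) c₀ (I ∩ loc A u w)

/-- `v` is a wall of the chamber `c`: some point of the closure of `c` lies on the
hyperplane of `v` and strictly off every other hyperplane of `A`. -/
def IsWall {n : ℕ} (A : Finset (V n)) (c : V n → Bool) (v : V n) : Prop :=
  v ∈ A ∧ ∃ x, v ⬝ᵥ x = 0 ∧ ∀ w ∈ A, ¬ SameHyp v w →
    (if c w then 0 < w ⬝ᵥ x else w ⬝ᵥ x < 0)

/-- The sign vector `v` is feasible: some point satisfies all its strict constraints. -/
def Feasible {n : ℕ} (A : Finset (V n)) (v : V n → SignType) : Prop :=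
  ∃ x : V n, ∀ h ∈ A, (v h = 1 → 0 < h ⬝ᵥ x) ∧ (v h = -1 → h ⬝ᵥ x < 0)

/-- A circuit of `A`: a minimal nonzero infeasible sign vector supported on `A`. -/
def IsCircuit {n : ℕ} (A : Finset (V n)) (v : V n → SignType) : Prop :=
  (∀ h, v h ≠ 0 → h ∈ A) ∧ (∃ h, v h ≠ 0) ∧ ¬ Feasible A v ∧
    ∀ w : V n → SignType, (∀ h, w h ≠ 0 → w h = v h) →
      {h | w h ≠ 0} ⊂ {h | v h ≠ 0} → Feasible A w

/-- A reduced gallery from `c₀` to `-c₀` in `A`, crossing hyperplanes `H 0, H 1, …`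
in order. -/
def IsGallery {n N : ℕ} (A : Finset (V n)) (c₀ : V n → Bool) (H : Fin N → V n)
    (d : Fin (N + 1) → V n → Bool) : Prop :=
  (∀ i, IsChamber A (d i)) ∧ d 0 = c₀ ∧ (∀ v ∈ A, d (Fin.last N) v = !c₀ v) ∧
    ∀ i : Fin N, SepSet A (d i.castSucc) (d i.succ) = {H i}

/-- The enumeration `H` of `A` is admissible: on every rank-2 localization, the
induced order is the crossing order of some reduced gallery of the localization. -/
def Admissible {n N : ℕ} (A : Finset (V n)) (c₀ : V n → Bool) (H : Fin N → V n) : Prop :=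
  ∀ u w, Codim2 A u w →
    ∃ (M : ℕ) (G : Fin M → V n) (e : Fin (M + 1) → V n → Bool) (φ : Fin M → Fin N),
      IsGallery (loc A u w) c₀ G e ∧ StrictMono φ ∧ ∀ k, G k = H (φ k)

/-- The intersection lattice of `A`, as a set of subspaces of `ℝⁿ`. -/
def InterLattice {n : ℕ} (A : Finset (V n)) : Set (Submodule ℝ (V n)) :=
  {X | ∃ S : Finset (V n), S ⊆ A ∧ X = S.inf (fun v => LinearMap.ker (hypl v))}

/-- A modular element of the intersection lattice of `A`. -/
def IsModular {n : ℕ} (A : Finset (V n)) (X : Submodule ℝ (V n)) : Prop :=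
  X ∈ InterLattice A ∧ ∀ Y ∈ InterLattice A, X ⊔ Y ∈ InterLattice A

/-- The rank of the arrangement `A`. -/
noncomputable def rankA {n : ℕ} (A : Finset (V n)) : ℕ :=
  Module.finrank ℝ (Submodule.span ℝ (A : Set (V n)))

/-- A modular flag: a maximal chain `⊤ = X 0 > X 1 > ⋯ > X r` of modular
elements of the intersection lattice, with `X i` of codimension `i`. -/
def IsModularFlag {n : ℕ} (A : Finset (V n)) (X : Fin (rankA A + 1) → Submodule ℝ (V n)) : Prop :=
  X 0 = ⊤ ∧ (∀ i, IsModular A (X i)) ∧ (∀ i j, i ≤ j → X j ≤ X i) ∧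
    ∀ i : Fin (rankA A + 1), Module.finrank ℝ (X i) = n - (i : ℕ)

/-- `A` is supersolvable: its intersection lattice has a modular flag. -/
def IsSupersolvable {n : ℕ} (A : Finset (V n)) : Prop :=
  ∃ X : Fin (rankA A + 1) → Submodule ℝ (V n), IsModularFlag A X

/-- The chamber `c` is incident to the subspace `X`:  some point of `X` lies in the
closure of `c` and strictly off every hyperplane of `A` not containing `X`. -/
def IncidentSub {n : ℕ} (A : Finset (V n)) (c : V n → Bool) (X : Submodule ℝ (V n)) : Prop :=
  ∃ x, x ∈ X ∧ ∀ v ∈ A, ¬ X ≤ LinearMap.ker (hypl v) →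
    (if c v then 0 < v ⬝ᵥ x else v ⬝ᵥ x < 0)

/-- The chamber `c` is incident to the codimension-2 subspace `ker u ∩ ker w`. -/
def IncidentLoc {n : ℕ} (A : Finset (V n)) (c : V n → Bool) (u w : V n) : Prop :=
  ∃ x, (∀ v ∈ loc A u w, v ⬝ᵥ x = 0) ∧ ∀ v ∈ A, v ∉ loc A u w →
    (if c v then 0 < v ⬝ᵥ x else v ⬝ᵥ x < 0)

/-- `(A, c₀)` is bineighborly: any chamber is incident to the intersection of any two
of its walls separating it from `-c₀`. -/
def Bineighborly {n : ℕ} (A : Finset (V n)) (c₀ : V n → Bool) : Prop :=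
  ∀ c, IsChamber A c → ∀ u w, IsWall A c u → IsWall A c w →
    u ∈ SepSet A c (fun v => !c₀ v) → w ∈ SepSet A c (fun v => !c₀ v) → IncidentLoc A c u w

/-- Every chamber of `A` is a simplicial cone: its walls are linearly independent
and span the same subspace as `A`. -/
def IsSimplicial {n : ℕ} (A : Finset (V n)) : Prop :=
  ∀ c, IsChamber A c →
    LinearIndependent ℝ ((↑) : {v // IsWall A c v} → V n) ∧
      Submodule.span ℝ {v | IsWall A c v} = Submodule.span ℝ (A : Set (V n))

/-!
Every hyperplane separates `c₀` from the opposite chamber, so it suffices to show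
`SepSet A c₀ c ⊆ I` for every chamber `c`, by induction on `#(SepSet A c₀ c)`. Let `H` be
separating. Walking from `c` towards `c₀` one first crosses a wall of `c`; if it is not `H`, the
next chamber still has `H` in its (smaller) separation set. Otherwise crossing `H` leads to a
chamber `c'` with `SepSet A c₀ c' ⊆ I`. If that set is empty, `H` is a wall of `c₀`. If not, `c'`
has a second wall `G ∈ SepSet A c₀ c'`, and since `c'` is simplicial its closure meets the face
`ker H ∩ ker G` in a point `ξ` off every hyperplane not containing that face. In the rank-two
localization at the face let `ρ` be the wall of `c₀` on the side of `H` away from `G`. The chamber which near `ξ`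
is the local chamber across `ρ` from `c₀`, and elsewhere is `c'`, is separated from `c₀` by `ρ`
and by fewer hyperplanes than `c` is; hence `ρ ∈ I`. As `H` lies between `G` and `ρ`, 2-closedness
puts `H` into `I`.
-/

section

open Matrix Finset Filter Topology

variable {n : ℕ} {A B L I : Finset (V n)} {c c₀ d e : V n → Bool} {u v w x y z p x₀ y₀ H G ρ : V n}

/-- The normal of `v` oriented towards `c`: a point `x` realizes `c` iff `0 < sg c v ⬝ᵥ x`
for all `v ∈ A`. -/
def sg (c : V n → Bool) (v : V n) : V n := if c v then v else -v

lemma sg_eq_or (c : V n → Bool) (v : V n) : sg c v = v ∨ sg c v = -v := by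
  unfold sg; split_ifs <;> simp

lemma sg_dotProduct (c : V n → Bool) (v x : V n) :
    sg c v ⬝ᵥ x = if c v then v ⬝ᵥ x else -(v ⬝ᵥ x) := by
  unfold sg; split_ifs <;> simp

lemma sg_dotProduct_eq_zero_iff : sg c v ⬝ᵥ x = 0 ↔ v ⬝ᵥ x = 0 := by
  rw [sg_dotProduct]; split_ifs <;> simp

lemma sg_congr (h : c v = d v) : sg c v = sg d v := by
  simp [sg, h]

lemma sg_eq_neg_of_ne (h : c v ≠ d v) : sg c v = -sg d v := by
  cases hc : c v <;> cases hd : d v <;> simp_all [sg]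

lemma realizes_iff : Realizes A c x ↔ ∀ v ∈ A, 0 < sg c v ⬝ᵥ x := by
  refine forall₂_congr fun v _ => ?_
  rw [sg_dotProduct]; split_ifs <;> simp

lemma Realizes.mono (h : Realizes A c x) (hBA : B ⊆ A) : Realizes B c x :=
  fun v hv => h v (hBA hv)

lemma realizes_neg (h : Realizes A c x) : Realizes A (fun v => !c v) (-x) := by
  rw [realizes_iff] at h ⊢
  intro v hv
  rw [sg_eq_neg_of_ne (d := c) (by simp), neg_dotProduct, dotProduct_neg, neg_neg]
  exact h v hv

lemma isChamber_singleton (hv : v ≠ 0) (c : V n → Bool) : IsChamber {v} c :=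
  ⟨sg c v, realizes_iff.2 fun w hw => by
    rw [mem_singleton.1 hw]
    have hvv : 0 < v ⬝ᵥ v := by simpa using dotProduct_self_star_pos_iff.2 hv
    rcases sg_eq_or c v with h | h <;> simpa [h] using hvv⟩

lemma mem_sepSet : v ∈ SepSet A c d ↔ v ∈ A ∧ c v ≠ d v :=
  mem_filter

lemma sepSet_comm (A : Finset (V n)) (c d : V n → Bool) : SepSet A c d = SepSet A d c :=
  filter_congr fun _ _ => ne_comm

lemma mem_sepSet_iff_of_realizes (hy : Realizes A d y) (hv : v ∈ A) :
    v ∈ SepSet A c d ↔ sg c v ⬝ᵥ y < 0 := by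
  have hd := realizes_iff.1 hy v hv
  rw [mem_sepSet]
  by_cases h : c v = d v
  · simp [h, sg_congr h, hd.le]
  · simp [h, hv, sg_eq_neg_of_ne h, hd]

lemma notMem_sepSet_iff_of_realizes (hy : Realizes A d y) (hv : v ∈ A) :
    v ∉ SepSet A c d ↔ 0 < sg c v ⬝ᵥ y := by
  have hd := realizes_iff.1 hy v hv
  rw [mem_sepSet]
  by_cases h : c v = d v
  · simp [h, sg_congr h, hd]
  · simp [h, hv, sg_eq_neg_of_ne h, hd.le]

lemma sepSet_flip (hv : v ∈ SepSet A c₀ c) :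
    SepSet A c₀ (Function.update c v (!c v)) = (SepSet A c₀ c).erase v := by
  ext w
  rw [mem_sepSet] at hv
  by_cases h : w = v
  · subst h; cases hc : c₀ w <;> cases hc' : c w <;> simp_all [mem_sepSet]
  · simp [mem_sepSet, h]

lemma eq_on_of_sepSet_eq_empty (h : SepSet A c d = ∅) : ∀ v ∈ A, d v = c v :=
  fun _ hv => (not_not.1 (filter_eq_empty_iff.1 h hv)).symm

lemma IsWall.congr (hv : IsWall A c v) (h : ∀ w ∈ A, w ≠ v → c w = d w) : IsWall A d v := by
  obtain ⟨hvA, x, hx, hpos⟩ := hv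
  refine ⟨hvA, x, hx, fun w hw hvw => ?_⟩
  rw [← h w hw (by rintro rfl; exact hvw fun _ => Iff.rfl)]
  exact hpos w hw hvw

lemma isWall_of_dotProduct (hv : v ∈ A) (hz : v ⬝ᵥ z = 0)
    (hpos : ∀ w ∈ A, w ≠ v → 0 < sg c w ⬝ᵥ z) : IsWall A c v := by
  refine ⟨hv, z, hz, fun w hw hvw => ?_⟩
  have := hpos w hw (by rintro rfl; exact hvw fun _ => Iff.rfl)
  rw [sg_dotProduct] at this
  split_ifs at this ⊢ <;> linarith

lemma IsWall.exists_dotProduct (hA : IsArrangement A) (hv : IsWall A c v) :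
    ∃ z, v ⬝ᵥ z = 0 ∧ ∀ w ∈ A, w ≠ v → 0 < sg c w ⬝ᵥ z := by
  obtain ⟨hvA, z, hz, hpos⟩ := hv
  refine ⟨z, hz, fun w hw hwv => ?_⟩
  have := hpos w hw fun h => hwv (hA.2 v hvA w hw h).symm
  rw [sg_dotProduct]
  split_ifs at this ⊢ <;> linarith

lemma IsArrangement.mono (hA : IsArrangement A) (hBA : B ⊆ A) : IsArrangement B :=
  ⟨fun v hv => hA.1 v (hBA hv), fun u hu w hw => hA.2 u (hBA hu) w (hBA hw)⟩

lemma IsArrangement.eq_of_eq_smul (hA : IsArrangement A) (hv : v ∈ A) (hw : w ∈ A) {a : ℝ}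
    (h : w = a • v) : w = v := by
  have ha : a ≠ 0 := by rintro rfl; exact hA.1 w hw (by simpa using h)
  refine (hA.2 v hv w hw fun x => ?_).symm
  simp [h, smul_dotProduct, ha]

lemma IsArrangement.eq_of_sg_eq_smul (hA : IsArrangement A) (hv : v ∈ A) (hw : w ∈ A) {a : ℝ}
    (h : sg c w = a • sg d v) : w = v := by
  rcases sg_eq_or c w with hc | hc <;> rcases sg_eq_or d v with hd | hd <;> rw [hc, hd] at h
  · exact hA.eq_of_eq_smul hv hw h
  · exact hA.eq_of_eq_smul hv hw (a := -a) (by simpa using h)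
  · exact hA.eq_of_eq_smul hv hw (a := -a) (by simpa using neg_eq_iff_eq_neg.1 h)
  · exact hA.eq_of_eq_smul hv hw (by simpa using h)

lemma IsArrangement.notMem_span_singleton (hA : IsArrangement A) (hv : v ∈ A) (hw : w ∈ A)
    (hne : v ≠ w) : v ∉ Submodule.span ℝ {w} := by
  rw [Submodule.mem_span_singleton]
  rintro ⟨a, rfl⟩
  exact hne (hA.eq_of_eq_smul hw hv rfl)

lemma IsArrangement.linearIndependent_pair (hA : IsArrangement A) (hv : v ∈ A) (hw : w ∈ A)
    (hne : v ≠ w) : LinearIndependent ℝ ![v, w] :=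
  linearIndependent_fin2.2
    ⟨by simpa using hA.1 w hw, fun a h => hne (hA.eq_of_eq_smul hw hv h.symm)⟩

lemma exists_dotProduct_ne_zero_of_notMem_span {s : Set (V n)}
    (hu : u ∉ Submodule.span ℝ s) : ∃ q : V n, (∀ w ∈ s, w ⬝ᵥ q = 0) ∧ u ⬝ᵥ q ≠ 0 := by
  obtain ⟨f, hfu, hf⟩ := Submodule.exists_dual_map_eq_bot_of_notMem hu inferInstance
  have hq : ∀ x, x ⬝ᵥ (dotProductEquiv ℝ (Fin n)).symm f = f x := fun x => by
    rw [dotProduct_comm, ← dotProductEquiv_apply_apply, LinearEquiv.apply_symm_apply]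
  refine ⟨_, fun w hw => ?_, by rwa [hq]⟩
  rw [hq]
  exact LinearMap.le_ker_iff_map.2 hf (Submodule.subset_span hw)

lemma exists_dotProduct_eq {s : Set (V n)} (hs : LinearIndepOn ℝ id s) (f : V n → ℝ) :
    ∃ x : V n, ∀ w ∈ s, w ⬝ᵥ x = f w := by
  let b : Module.Basis _ ℝ (V n) := .mk (hs.linearIndepOn_extend (Set.subset_univ _)) <| by
    simpa using hs.span_extend_eq_span <| Set.subset_univ _
  refine ⟨(dotProductEquiv ℝ (Fin n)).symm (b.constr ℝ fun i => f i), fun w hw => ?_⟩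
  have hb : b ⟨w, hs.subset_extend _ hw⟩ = w := by simp [b]
  rw [dotProduct_comm, ← dotProductEquiv_apply_apply, LinearEquiv.apply_symm_apply, ← hb,
    b.constr_basis, hb]

lemma mem_loc_iff : v ∈ loc A u w ↔ v ∈ A ∧ v ∈ Submodule.span ℝ {u, w} := by
  refine mem_filter.trans (and_congr_right fun _ => ⟨fun h => ?_, fun h x hu hw => ?_⟩)
  · by_contra hv
    obtain ⟨q, hq, hvq⟩ := exists_dotProduct_ne_zero_of_notMem_span hv
    exact hvq (h q (hq u (by simp)) (hq w (by simp)))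
  · obtain ⟨a, b, rfl⟩ := Submodule.mem_span_pair.1 h
    simp [add_dotProduct, smul_dotProduct, hu, hw]

lemma mem_loc_left (hu : u ∈ A) (w : V n) : u ∈ loc A u w :=
  mem_filter.2 ⟨hu, fun _ h _ => h⟩

lemma mem_loc_right (hw : w ∈ A) (u : V n) : w ∈ loc A u w :=
  mem_filter.2 ⟨hw, fun _ _ h => h⟩

lemma loc_subset (A : Finset (V n)) (u w : V n) : loc A u w ⊆ A :=
  filter_subset _ _

lemma exists_pos_forall_dotProduct_add_smul_pos {ι : Type*} (T : Finset ι) (f : ι → V n)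
    (hz : ∀ i ∈ T, 0 < f i ⬝ᵥ z) (q : V n) :
    ∃ δ : ℝ, 0 < δ ∧ ∀ i ∈ T, 0 < f i ⬝ᵥ (z + δ • q) := by
  have hnear : ∀ᶠ δ in 𝓝 (0 : ℝ), ∀ i ∈ T, 0 < f i ⬝ᵥ (z + δ • q) := by
    refine (eventually_all_finset T).2 fun i hi => ?_
    have hcont : Continuous fun δ : ℝ => f i ⬝ᵥ (z + δ • q) := by fun_prop
    exact continuousAt_const.eventually_lt hcont.continuousAt (by simpa using hz i hi)
  obtain ⟨δ, hδ, hδpos⟩ :=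
    ((hnear.filter_mono nhdsWithin_le_nhds).and (self_mem_nhdsWithin (s := Set.Ioi 0))).exists
  exact ⟨δ, hδpos, hδ⟩

lemma Realizes.exists_forall_dotProduct_ne_zero (hy₀ : Realizes A c y₀) (S : Finset (V n))
    (hS : ∀ g ∈ S, g ≠ 0) : ∃ y, Realizes A c y ∧ ∀ g ∈ S, g ⬝ᵥ y ≠ 0 := by
  have hopen : IsOpen {y | Realizes A c y} := by
    simp only [realizes_iff, Set.ofPred_forall]
    exact isOpen_biInter_finset fun v _ => isOpen_lt continuous_const (by fun_prop)
  have hdense : Dense (⋂ g ∈ S, {y : V n | g ⬝ᵥ y ≠ 0}) := by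
    refine dense_biInter_of_isOpen (fun g _ => isOpen_ne_fun (by fun_prop) continuous_const)
      S.countable_toSet fun g hg => ?_
    show Dense ((LinearMap.ker (hypl g) : Set (V n))ᶜ)
    refine interior_eq_empty_iff_dense_compl.1 (Set.not_nonempty_iff_eq_empty.1 fun hint => ?_)
    have hgg := (Submodule.eq_top_of_nonempty_interior' _ hint).symm ▸ Submodule.mem_top (x := g)
    exact hS g hg (dotProduct_self_eq_zero.1 hgg)
  obtain ⟨y, hy, hyS⟩ := hdense.inter_open_nonempty _ hopen ⟨y₀, hy₀⟩
  exact ⟨y, hy, by simpa using hyS⟩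

/-- The segment from `y` to `p` crosses distinct hyperplanes at distinct times. -/
lemma Realizes.exists_generic (hA : IsArrangement A) (hy₀ : Realizes A c y₀) (p : V n) :
    ∃ y, Realizes A c y ∧ ∀ v ∈ A, ∀ w ∈ A, v ≠ w → sg c v ⬝ᵥ p ≠ 0 →
      (sg c v ⬝ᵥ p) * (sg c w ⬝ᵥ y) ≠ (sg c w ⬝ᵥ p) * (sg c v ⬝ᵥ y) := by
  let g : V n × V n → V n := fun vw =>
    (sg c vw.1 ⬝ᵥ p) • sg c vw.2 - (sg c vw.2 ⬝ᵥ p) • sg c vw.1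
  obtain ⟨y, hy, hgy⟩ := hy₀.exists_forall_dotProduct_ne_zero
    ((A.offDiag.filter fun vw => sg c vw.1 ⬝ᵥ p ≠ 0).image g) (by
      simp only [mem_image, mem_filter, mem_offDiag]
      rintro _ ⟨⟨v, w⟩, ⟨⟨hv, hw, hvw⟩, hvp⟩, rfl⟩ h0
      refine hvw (hA.eq_of_sg_eq_smul hv hw (c := c) (d := c)
        (a := (sg c w ⬝ᵥ p) / (sg c v ⬝ᵥ p)) ?_).symm
      rw [sub_eq_zero] at h0
      rw [div_eq_inv_mul, mul_smul, ← h0, smul_smul, inv_mul_cancel₀ hvp, one_smul])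
  refine ⟨y, hy, fun v hv w hw hvw hvp h => hgy (g (v, w)) ?_ ?_⟩
  · exact mem_image_of_mem _ (mem_filter.2 ⟨mem_offDiag.2 ⟨hv, hw, hvw⟩, hvp⟩)
  · simp [g, sub_dotProduct, smul_dotProduct, h]

/-- Walking from a generic point `y` of the chamber towards `p`, the first hyperplane crossed is
a wall of the chamber. -/
lemma exists_isWall_of_sg_dotProduct_neg (hA : IsArrangement A) (hy₀ : Realizes A c y₀)
    (hp : ∃ v ∈ A, sg c v ⬝ᵥ p < 0) : ∃ v ∈ A, sg c v ⬝ᵥ p < 0 ∧ IsWall A c v := by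
  obtain ⟨y, hy, hgen⟩ := hy₀.exists_generic hA p
  have hyA := realizes_iff.1 hy
  set B := A.filter fun v => sg c v ⬝ᵥ p < 0
  have hB : ∀ v ∈ B, v ∈ A ∧ sg c v ⬝ᵥ p < 0 := fun v hv => mem_filter.1 hv
  let t : V n → ℝ := fun v => sg c v ⬝ᵥ y / (sg c v ⬝ᵥ y - sg c v ⬝ᵥ p)
  have ht : ∀ v ∈ B, t v * (sg c v ⬝ᵥ y - sg c v ⬝ᵥ p) = sg c v ⬝ᵥ y := fun v hv =>
    div_mul_cancel₀ _ (by linarith [hyA v (hB v hv).1, (hB v hv).2])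
  obtain ⟨v₁, hv₁, hmin⟩ := B.exists_min_image t (by
    obtain ⟨v, hv, hvp⟩ := hp; exact ⟨v, mem_filter.2 ⟨hv, hvp⟩⟩)
  obtain ⟨hv₁A, hv₁p⟩ := hB v₁ hv₁
  have hy₁ := hyA v₁ hv₁A
  have ht₁ := ht v₁ hv₁
  have ht₁0 : 0 < t v₁ := div_pos hy₁ (by linarith)
  have ht₁1 : t v₁ < 1 := (div_lt_one (by linarith)).2 (by linarith)
  set z := y + t v₁ • (p - y)
  have hz : ∀ v, sg c v ⬝ᵥ z = sg c v ⬝ᵥ y + t v₁ * (sg c v ⬝ᵥ p - sg c v ⬝ᵥ y) := fun v => by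
    simp [z, dotProduct_add, dotProduct_sub]
  refine ⟨v₁, hv₁A, hv₁p, isWall_of_dotProduct (z := z) hv₁A ?_ fun v hv hvv₁ => ?_⟩
  · rw [← sg_dotProduct_eq_zero_iff (c := c), hz]
    linarith
  rw [hz]
  by_cases hvB : v ∈ B
  · have hvt := ht v hvB
    have hvy := hyA v hv
    have hvp := (hB v hvB).2
    have hne : t v ≠ t v₁ := fun heq => hgen v₁ hv₁A v hv (Ne.symm hvv₁) hv₁p.ne (by
      rw [heq] at hvt
      have h1 : (1 - t v₁) *
          ((sg c v₁ ⬝ᵥ p) * (sg c v ⬝ᵥ y) - (sg c v ⬝ᵥ p) * (sg c v₁ ⬝ᵥ y)) = 0 := by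
        linear_combination (sg c v ⬝ᵥ p) * ht₁ - (sg c v₁ ⬝ᵥ p) * hvt
      linarith [(mul_eq_zero.1 h1).resolve_left (by linarith)])
    have hlt : t v₁ < t v := (hmin v hvB).lt_of_ne' hne
    nlinarith
  · have hvp : 0 ≤ sg c v ⬝ᵥ p := not_lt.1 fun h => hvB (mem_filter.2 ⟨hv, h⟩)
    nlinarith [hyA v hv]

lemma exists_isWall_mem_sepSet (hA : IsArrangement A) (hx₀ : Realizes A c₀ x₀)
    (hc : IsChamber A c) (hne : (SepSet A c₀ c).Nonempty) : ∃ v ∈ SepSet A c₀ c, IsWall A c v := by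
  obtain ⟨y, hy⟩ := hc
  rw [sepSet_comm] at hne ⊢
  obtain ⟨v, hv⟩ := hne
  obtain ⟨w, hw, hwx₀, hwall⟩ := exists_isWall_of_sg_dotProduct_neg hA hy
    ⟨v, (mem_sepSet.1 hv).1, (mem_sepSet_iff_of_realizes hx₀ (mem_sepSet.1 hv).1).1 hv⟩
  exact ⟨w, (mem_sepSet_iff_of_realizes hx₀ hw).2 hwx₀, hwall⟩

lemma sg_dotProduct_nonneg_of_isWall (hA : IsArrangement A) (hy : Realizes A c y)
    (hp : ∀ w, IsWall A c w → 0 ≤ sg c w ⬝ᵥ p) : ∀ v ∈ A, 0 ≤ sg c v ⬝ᵥ p := by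
  by_contra! h
  obtain ⟨w, -, hw, hwall⟩ := exists_isWall_of_sg_dotProduct_neg hA hy h
  exact (hp w hwall).not_gt hw

lemma isChamber_piecewise {ξ : V n} (hξL : ∀ v ∈ L, v ⬝ᵥ ξ = 0)
    (hξ : ∀ v ∈ A, v ∉ L → 0 < sg c v ⬝ᵥ ξ) (he : IsChamber L e) :
    IsChamber A fun v => if v ∈ L then e v else c v := by
  obtain ⟨y, hy⟩ := he
  obtain ⟨δ, hδ, hpos⟩ := exists_pos_forall_dotProduct_add_smul_pos (A.filter (· ∉ L)) (sg c)
    (fun v hv => hξ v (mem_filter.1 hv).1 (mem_filter.1 hv).2) y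
  refine ⟨ξ + δ • y, realizes_iff.2 fun v hv => ?_⟩
  by_cases hvL : v ∈ L
  · rw [sg_congr (if_pos hvL), dotProduct_add, sg_dotProduct_eq_zero_iff.2 (hξL v hvL),
      dotProduct_smul, smul_eq_mul, zero_add]
    exact mul_pos hδ (realizes_iff.1 hy v hvL)
  · rw [sg_congr (if_neg hvL)]
    exact hpos v (mem_filter.2 ⟨hv, hvL⟩)

lemma isChamber_flip (hA : IsArrangement A) (hv : IsWall A c v) :
    IsChamber A (Function.update c v (!c v)) := by
  obtain ⟨z, hz, hpos⟩ := hv.exists_dotProduct hA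
  convert isChamber_piecewise (L := {v}) (c := c) (e := Function.update c v (!c v))
    (by simpa using hz) (fun w hw hwv => hpos w hw (by simpa using hwv))
    (isChamber_singleton (hA.1 v hv.1) _) using 1
  ext w
  by_cases h : w = v <;> simp [h]

lemma isWall_flip (hv : IsWall A c v) : IsWall A (Function.update c v (!c v)) v :=
  hv.congr fun _ _ hw => (Function.update_of_ne hw _ _).symm

lemma sepSet_piecewise_update (hLA : L ⊆ A) (hρ : ρ ∈ L) :
    SepSet A c₀ (fun v => if v ∈ L then Function.update c₀ ρ (!c₀ ρ) v else c v) =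
      insert ρ ((SepSet A c₀ c).filter (· ∉ L)) := by
  ext v
  by_cases hvL : v ∈ L
  · by_cases hvρ : v = ρ
    · subst hvρ; simp [mem_sepSet, hLA hρ, hρ]
    · simp [mem_sepSet, hvL, hvρ]
  · have hvρ : v ≠ ρ := by rintro rfl; exact hvL hρ
    simp [mem_sepSet, hvL, hvρ]

lemma exists_corner (hA : IsArrangement A)
    (hli : LinearIndependent ℝ ((↑) : {v // IsWall A c v} → V n)) (hy : Realizes A c y)
    (hH : IsWall A c H) (hG : IsWall A c G) :
    ∃ ξ, (∀ v ∈ loc A H G, v ⬝ᵥ ξ = 0) ∧ ∀ v ∈ A, v ∉ loc A H G → 0 < sg c v ⬝ᵥ ξ := by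
  obtain ⟨ξ, hξ⟩ := exists_dotProduct_eq (s := {v | IsWall A c v}) hli
    fun w => if w = H ∨ w = G then 0 else if c w then 1 else -1
  have hwall : ∀ w, IsWall A c w → sg c w ⬝ᵥ ξ = if w = H ∨ w = G then 0 else 1 :=
    fun w hw => by rw [sg_dotProduct, hξ w hw]; split_ifs <;> simp
  have hHξ : H ⬝ᵥ ξ = 0 := by simpa using hξ H hH
  have hGξ : G ⬝ᵥ ξ = 0 := by simpa using hξ G hG
  have hnonneg := sg_dotProduct_nonneg_of_isWall hA hy fun w hw => by
    rw [hwall w hw]; split_ifs <;> norm_num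
  refine ⟨ξ, fun v hv => (mem_filter.1 hv).2 ξ hHξ hGξ, fun v hv hvL => ?_⟩
  refine (hnonneg v hv).lt_of_ne' fun hvξ => ?_
  obtain ⟨x, hHx, hGx, hvx⟩ : ∃ x, H ⬝ᵥ x = 0 ∧ G ⬝ᵥ x = 0 ∧ v ⬝ᵥ x ≠ 0 := by
    simpa [loc, hv] using hvL
  -- moving `ξ` inside the face in direction `q` would stay in the closed chamber but leave the
  -- half-space of `v`
  set q := -(sg c v ⬝ᵥ x) • x
  obtain ⟨δ, hδ, hpos⟩ := exists_pos_forall_dotProduct_add_smul_pos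
    (A.filter fun w => IsWall A c w ∧ ¬(w = H ∨ w = G)) (sg c)
    (fun w hw => by rw [hwall w (mem_filter.1 hw).2.1, if_neg (mem_filter.1 hw).2.2]; norm_num) q
  have hface : ∀ w, w ⬝ᵥ x = 0 → w ⬝ᵥ ξ = 0 → sg c w ⬝ᵥ (ξ + δ • q) = 0 := fun w hwx hwξ => by
    rw [sg_dotProduct_eq_zero_iff]; simp [q, dotProduct_add, hwx, hwξ]
  have hvq := sg_dotProduct_nonneg_of_isWall hA hy (p := ξ + δ • q) (fun w hw => by
    by_cases hw' : w = H ∨ w = G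
    · rcases hw' with rfl | rfl
      exacts [(hface w hHx hHξ).ge, (hface w hGx hGξ).ge]
    · exact (hpos w (mem_filter.2 ⟨hw.1, hw, hw'⟩)).le) v hv
  have hsvx : sg c v ⬝ᵥ x ≠ 0 := sg_dotProduct_eq_zero_iff.not.2 hvx
  simp only [q, dotProduct_add, hvξ, dotProduct_smul, smul_eq_mul, zero_add] at hvq
  nlinarith [mul_pos hδ (mul_self_pos.2 hsvx)]

lemma exists_sg_dotProduct_eq_of_mem_span (c : V n → Bool) (h : H ∈ Submodule.span ℝ {u, w}) :
    ∃ α β : ℝ, ∀ x, sg c H ⬝ᵥ x = α * (sg c u ⬝ᵥ x) + β * (sg c w ⬝ᵥ x) := by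
  obtain ⟨a, b, rfl⟩ := Submodule.mem_span_pair.1 h
  refine ⟨(if c (a • u + b • w) then 1 else -1) * a * (if c u then 1 else -1),
    (if c (a • u + b • w) then 1 else -1) * b * (if c w then 1 else -1), fun x => ?_⟩
  simp only [sg_dotProduct, add_dotProduct, smul_dotProduct, smul_eq_mul]
  split_ifs <;> ring

/-- `ρ` is the wall of the rank-two chamber of `c₀` at `ker H ∩ ker G` first crossed on the way
to a point of `ker G` beyond `H`. -/
lemma exists_loc_wall_cone (hA : IsArrangement A) (hx₀ : Realizes A c₀ x₀) (hH : H ∈ A)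
    (hG : G ∈ A) (hHG : H ≠ G) :
    ∃ ρ ∈ loc A H G, ρ ≠ G ∧ IsChamber (loc A H G) (Function.update c₀ ρ (!c₀ ρ)) ∧
      H ∈ loc A G ρ ∧ ∀ y, 0 < sg c₀ G ⬝ᵥ y → 0 < sg c₀ ρ ⬝ᵥ y → 0 < sg c₀ H ⬝ᵥ y := by
  have hL := hA.mono (loc_subset A H G)
  obtain ⟨p, hGp, hHp⟩ : ∃ p, G ⬝ᵥ p = 0 ∧ sg c₀ H ⬝ᵥ p < 0 := by
    obtain ⟨q, hq, hHq⟩ :=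
      exists_dotProduct_ne_zero_of_notMem_span (hA.notMem_span_singleton hH hG hHG)
    have hGq : G ⬝ᵥ q = 0 := hq G rfl
    rcases lt_or_gt_of_ne ((sg_dotProduct_eq_zero_iff (c := c₀)).not.2 hHq) with h | h
    · exact ⟨q, hGq, h⟩
    · exact ⟨-q, by simp [hGq], by simpa using h⟩
  obtain ⟨ρ, hρL, hρp, hρ⟩ := exists_isWall_of_sg_dotProduct_neg hL (hx₀.mono (loc_subset A H G))
    ⟨H, mem_loc_left hH G, hHp⟩
  have hρG : ρ ≠ G := by
    rintro rfl; exact hρp.ne (sg_dotProduct_eq_zero_iff.2 hGp)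
  refine ⟨ρ, hρL, hρG, isChamber_flip hL hρ, ?_⟩
  rcases eq_or_ne ρ H with rfl | hρH
  · exact ⟨mem_loc_right hH G, fun _ _ h => h⟩
  have hHspan : H ∈ Submodule.span ℝ {ρ, G} :=
    mem_span_insert_exchange (mem_loc_iff.1 hρL).2
      (hA.notMem_span_singleton (loc_subset A H G hρL) hG hρG)
  refine ⟨mem_loc_iff.2 ⟨hH, by rwa [Set.pair_comm]⟩, ?_⟩
  obtain ⟨α, β, hαβ⟩ := exists_sg_dotProduct_eq_of_mem_span c₀ hHspan
  obtain ⟨z, hρz, hz⟩ := hρ.exists_dotProduct hL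
  have hβ : 0 < β := by
    have hHz := hz H (mem_loc_left hH G) hρH.symm
    rw [hαβ, sg_dotProduct_eq_zero_iff.2 hρz, mul_zero, zero_add] at hHz
    exact (pos_iff_pos_of_mul_pos hHz).2 (hz G (mem_loc_right hG H) hρG.symm)
  have hα : 0 < α := by
    have hHp' := hαβ p
    rw [sg_dotProduct_eq_zero_iff.2 hGp, mul_zero, add_zero] at hHp'
    nlinarith
  intro y hGy hρy
  rw [hαβ]
  positivity

lemma mem_of_is2Closed (hA : IsArrangement A) (h2c : Is2Closed A c₀ I) (hG : G ∈ A) (hρ : ρ ∈ A)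
    (hρG : ρ ≠ G) (hGI : G ∈ I) (hρI : ρ ∈ I) (hH : H ∈ loc A G ρ)
    (hcone : ∀ y, 0 < sg c₀ G ⬝ᵥ y → 0 < sg c₀ ρ ⬝ᵥ y → 0 < sg c₀ H ⬝ᵥ y) : H ∈ I := by
  by_contra hHI
  obtain ⟨e, ⟨y, hy⟩, hHe, hsub⟩ := h2c G ρ ⟨hG, hρ, hA.linearIndependent_pair hG hρ hρG.symm⟩ H
    (mem_sdiff.2 ⟨hH, fun h => hHI (mem_inter.1 h).1⟩)
  have hpos : ∀ v ∈ I, v ∈ loc A G ρ → 0 < sg c₀ v ⬝ᵥ y := fun v hvI hvL =>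
    (notMem_sepSet_iff_of_realizes hy hvL).1 fun hv =>
      (mem_sdiff.1 (hsub hv)).2 (mem_inter.2 ⟨hvI, hvL⟩)
  exact (hcone y (hpos G hGI (mem_loc_left hG ρ)) (hpos ρ hρI (mem_loc_right hρ G))).not_gt
    ((mem_sepSet_iff_of_realizes hy hH).1 hHe)

lemma mem_of_isWall_of_is2Closed (hA : IsArrangement A) (hsimp : IsSimplicial A)
    (hx₀ : Realizes A c₀ x₀) (h2c : Is2Closed A c₀ I) (hc : IsChamber A c) (hH : IsWall A c H)
    (hG : IsWall A c G) (hGsep : G ∈ SepSet A c₀ c) (hHG : H ≠ G)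
    (hIH : ∀ d, IsChamber A d → #(SepSet A c₀ d) ≤ #(SepSet A c₀ c) → SepSet A c₀ d ⊆ I) :
    H ∈ I := by
  obtain ⟨y, hy⟩ := hc
  obtain ⟨ξ, hξL, hξ⟩ := exists_corner hA (hsimp c ⟨y, hy⟩).1 hy hH hG
  obtain ⟨ρ, hρL, hρG, he, hHloc, hcone⟩ := exists_loc_wall_cone hA hx₀ hH.1 hG.1 hHG
  set d := fun v => if v ∈ loc A H G then Function.update c₀ ρ (!c₀ ρ) v else c v
  have hd : IsChamber A d := isChamber_piecewise hξL hξ he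
  have hsep : SepSet A c₀ d = _ := sepSet_piecewise_update (loc_subset A H G) hρL
  have hcard : #(SepSet A c₀ d) ≤ #(SepSet A c₀ c) := by
    rw [hsep]
    refine (card_insert_le _ _).trans (card_lt_card (filter_ssubset.2 ⟨G, hGsep, ?_⟩))
    simpa using mem_loc_right hG.1 H
  exact mem_of_is2Closed hA h2c hG.1 (loc_subset A H G hρL) hρG
    (hIH c ⟨y, hy⟩ le_rfl hGsep) (hIH d hd hcard (hsep ▸ mem_insert_self _ _)) hHloc hcone

lemma sepSet_subset_of_is2Closed (hA : IsArrangement A) (hsimp : IsSimplicial A)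
    (hx₀ : Realizes A c₀ x₀) (h2c : Is2Closed A c₀ I) (hwalls : ∀ v, IsWall A c₀ v → v ∈ I)
    (hc : IsChamber A c) : SepSet A c₀ c ⊆ I := by
  induction hk : #(SepSet A c₀ c) using Nat.strong_induction_on generalizing c with
  | _ k IH =>
  intro H hH
  obtain ⟨v, hv, hvwall⟩ := exists_isWall_mem_sepSet hA hx₀ hc ⟨H, hH⟩
  set c' := Function.update c v (!c v)
  have hc' : IsChamber A c' := isChamber_flip hA hvwall
  have hsep' : SepSet A c₀ c' = (SepSet A c₀ c).erase v := sepSet_flip hv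
  have hIH : ∀ d, IsChamber A d → #(SepSet A c₀ d) ≤ #(SepSet A c₀ c') → SepSet A c₀ d ⊆ I := by
    intro d hd hcard
    rw [hsep', card_erase_of_mem hv] at hcard
    exact IH _ (by have := card_pos.2 ⟨v, hv⟩; omega) hd rfl
  rcases ne_or_eq v H with hvH | rfl
  · exact hIH c' hc' le_rfl (hsep' ▸ mem_erase.2 ⟨hvH.symm, hH⟩)
  rcases (SepSet A c₀ c').eq_empty_or_nonempty with h0 | hne
  · exact hwalls v ((isWall_flip hvwall).congr fun w hw _ => eq_on_of_sepSet_eq_empty h0 w hw)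
  obtain ⟨G, hG, hGwall⟩ := exists_isWall_mem_sepSet hA hx₀ hc' hne
  exact mem_of_isWall_of_is2Closed hA hsimp hx₀ h2c hc' (isWall_flip hvwall) hGwall hG
    (mem_erase.1 (hsep' ▸ hG)).1.symm hIH

end

theorem simplicial_twoClosed_walls {n : ℕ} (A : Finset (V n)) (hA : IsArrangement A)
    (c₀ : V n → Bool) (hc₀ : IsChamber A c₀) (hsimp : IsSimplicial A)
    (I : Finset (V n)) (hIA : I ⊆ A) (h2c : Is2Closed A c₀ I)
    (hwalls : ∀ v, IsWall A c₀ v → v ∈ I) :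
    I = A := by
  obtain ⟨x₀, hx₀⟩ := hc₀
  refine hIA.antisymm fun H hH => sepSet_subset_of_is2Closed hA hsimp hx₀ h2c hwalls
    ⟨-x₀, realizes_neg hx₀⟩ (mem_sepSet.2 ⟨hH, by simp⟩)
end

section
/- Every real central hyperplane arrangement of rank r admits a supersolvable extension of the same rank, i.e., there exists a supersolvable arrangement of rank r containing it. -/
open Matrix
open scoped Classical

/-! Work with normal vectors: the flat cut out by the normals in `S` is the annihilator
`orth (span S)`, and `orth` turns intersections of subspaces into sums of flats. Choose a flag
`0 = T₀ < T₁ < ⋯ < T_r = span A` of subspaces spanned by normals of `A`; `orth T_j` is modular as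
soon as any two normals in `T_{j+1} \ T_j` span a plane whose line of intersection with `T_j` is
again spanned by a normal of the arrangement, since then, by downward induction on `j`, every
`T_j ∩ span S` is spanned by normals. Codimension one of `T_j` in `T_{j+1}` provides these lines;
adding them level by level from the top terminates because new normals only go to lower levels.
Finally normals defining the same hyperplane are merged, keeping those of `A`. -/

open Submodule Module

section

variable {n : ℕ}

-- `{x | ∀ u ∈ U, u ⬝ᵥ x = 0}`, written through `dualCoannihilator` so that the duality theory of
-- finite-dimensional subspaces applies.
noncomputable def orth (U : Submodule ℝ (V n)) : Submodule ℝ (V n) :=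
  (U.map (dotProductEquiv ℝ (Fin n) : V n →ₗ[ℝ] Dual ℝ (V n))).dualCoannihilator

theorem mem_orth {U : Submodule ℝ (V n)} {x : V n} : x ∈ orth U ↔ ∀ u ∈ U, u ⬝ᵥ x = 0 := by
  simp only [orth, mem_dualCoannihilator, mem_map, forall_exists_index, and_imp,
    forall_apply_eq_imp_iff₂]
  rfl

theorem finrank_orth (U : Submodule ℝ (V n)) : finrank ℝ (orth U) = n - finrank ℝ U := by
  have h := Subspace.finrank_add_finrank_dualCoannihilator_eq
    (U.map (dotProductEquiv ℝ (Fin n) : V n →ₗ[ℝ] Dual ℝ (V n)))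
  rw [LinearEquiv.finrank_map_eq, finrank_fin_fun] at h
  exact Nat.eq_sub_of_add_eq' h

theorem orth_antitone : Antitone (orth (n := n)) :=
  fun _ _ hUU' _ hx => mem_orth.2 fun u hu => mem_orth.1 hx u (hUU' hu)

theorem orth_bot : orth (⊥ : Submodule ℝ (V n)) = ⊤ :=
  eq_top_iff.2 fun x _ => mem_orth.2 fun u hu => by simp [(mem_bot ℝ).1 hu]

theorem orth_inf (U U' : Submodule ℝ (V n)) : orth (U ⊓ U') = orth U ⊔ orth U' := by
  rw [orth, map_inf _ (dotProductEquiv ℝ (Fin n)).injective]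
  exact (Subspace.orderIsoFiniteDimensional (K := ℝ) (V := V n)).symm.map_sup
    (OrderDual.toDual (U.map _)) (OrderDual.toDual (U'.map _))

theorem orth_injective : Function.Injective (orth (n := n)) :=
  Subspace.orderIsoFiniteDimensional.symm.injective.comp
    (map_injective_of_injective (dotProductEquiv ℝ (Fin n)).injective :)

theorem inf_ker_hypl_eq_orth (S : Finset (V n)) :
    S.inf (fun v => LinearMap.ker (hypl v)) = orth (span ℝ (S : Set (V n))) := by
  ext x
  rw [mem_finsetInf, mem_orth]
  refine ⟨fun h u hu => ?_, fun h v hv => h v (subset_span hv)⟩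
  induction hu using span_induction with
  | mem v hv => exact h v hv
  | zero => exact zero_dotProduct x
  | add a b _ _ ha hb => rw [add_dotProduct, ha, hb, add_zero]
  | smul c a _ ha => rw [smul_dotProduct, ha, smul_zero]

theorem SameHyp.span_singleton_eq {u w : V n} (h : SameHyp u w) :
    span ℝ {u} = span ℝ {w} := by
  apply orth_injective
  have key (v : V n) : orth (span ℝ {v}) = LinearMap.ker (hypl v) := by
    simpa using (inf_ker_hypl_eq_orth {v}).symm
  ext x
  rw [key, key]
  exact h x

def IsSpannedBy (B : Finset (V n)) (U : Submodule ℝ (V n)) : Prop :=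
  ∃ S ⊆ B, span ℝ (S : Set (V n)) = U

theorem IsSpannedBy.mono {B B' : Finset (V n)} {U : Submodule ℝ (V n)} (h : IsSpannedBy B U)
    (hBB' : B ⊆ B') : IsSpannedBy B' U :=
  let ⟨S, hSB, hS⟩ := h; ⟨S, hSB.trans hBB', hS⟩

theorem IsSpannedBy.le_span {B : Finset (V n)} {U : Submodule ℝ (V n)} (h : IsSpannedBy B U) :
    U ≤ span ℝ (B : Set (V n)) :=
  let ⟨_, hSB, hS⟩ := h; hS ▸ span_mono (by exact_mod_cast hSB)

theorem isModular_orth {B : Finset (V n)} {U : Submodule ℝ (V n)} (hU : IsSpannedBy B U)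
    (hinf : ∀ S ⊆ B, IsSpannedBy B (U ⊓ span ℝ (S : Set (V n)))) : IsModular B (orth U) := by
  have mem_interLattice {U'} (h : IsSpannedBy B U') : orth U' ∈ InterLattice B :=
    let ⟨S, hSB, hS⟩ := h; ⟨S, hSB, by rw [inf_ker_hypl_eq_orth, hS]⟩
  refine ⟨mem_interLattice hU, ?_⟩
  rintro _ ⟨S, hSB, rfl⟩
  rw [inf_ker_hypl_eq_orth, ← orth_inf]
  exact mem_interLattice (hinf S hSB)

-- Dual form of the criterion for `orth Tl` to be a modular line of the localization at `orth Th`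
-- (when `Tl` has codimension one in `Th`).
def PairClosed (B : Finset (V n)) (Tl Th : Submodule ℝ (V n)) : Prop :=
  ∀ v ∈ B, ∀ w ∈ B, v ∈ Th → v ∉ Tl → w ∈ Th → w ∉ Tl → w ∉ span ℝ {v} →
    ∃ u ∈ B, u ∈ Tl ⊓ span ℝ {v, w}

theorem PairClosed.of_subset {B D : Finset (V n)} {Tl Th : Submodule ℝ (V n)}
    (hD : PairClosed D Tl Th) (hBD : B ⊆ D) (hlines : ∀ d ∈ D, ∃ b ∈ B, span ℝ {b} = span ℝ {d}) :
    PairClosed B Tl Th := by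
  intro v hv w hw hvTh hvTl hwTh hwTl hwv
  obtain ⟨u, huD, hu⟩ := hD v (hBD hv) w (hBD hw) hvTh hvTl hwTh hwTl hwv
  obtain ⟨b, hbB, hbu⟩ := hlines u huD
  exact ⟨b, hbB, (span_singleton_le_iff_mem u _).2 hu (hbu ▸ mem_span_singleton_self b)⟩

theorem isSpannedBy_inf_of_pairClosed {B : Finset (V n)} (hB0 : ∀ b ∈ B, b ≠ 0)
    {Tl Th : Submodule ℝ (V n)} (hpair : PairClosed B Tl Th) {S : Finset (V n)} (hSB : S ⊆ B)
    (hSTh : span ℝ (S : Set (V n)) ≤ Th) : IsSpannedBy B (Tl ⊓ span ℝ (S : Set (V n))) := by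
  by_cases hSTl : ∀ v ∈ S, v ∈ Tl
  · exact ⟨S, hSB, (inf_eq_right.2 (span_le.2 hSTl)).symm⟩
  push Not at hSTl
  obtain ⟨v, hvS, hvTl⟩ := hSTl
  have hdisj : span ℝ {v} ⊓ Tl = ⊥ := (disjoint_span_singleton_of_notMem hvTl).symm.eq_bot
  set S' := B.filter (· ∈ Tl ⊓ span ℝ (S : Set (V n)))
  have hS' : span ℝ (S' : Set (V n)) ≤ Tl ⊓ span ℝ (S : Set (V n)) :=
    span_le.2 fun u hu => (Finset.mem_filter.1 hu).2
  have hS'mem {u} (huB : u ∈ B) (huTl : u ∈ Tl) (huS : u ∈ span ℝ (S : Set (V n))) :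
      u ∈ span ℝ (S' : Set (V n)) :=
    subset_span (Finset.mem_filter.2 ⟨huB, huTl, huS⟩)
  -- every `w ∈ S` outside `Tl` is recovered from `v` and the normal `u` that `B` places on the
  -- line `Tl ∩ span {v, w}`
  have key : span ℝ (S : Set (V n)) ≤ span ℝ (S' : Set (V n)) ⊔ span ℝ {v} := by
    refine span_le.2 fun w hwS => ?_
    by_cases hwTl : w ∈ Tl
    · exact mem_sup_left (hS'mem (hSB hwS) hwTl (subset_span hwS))
    by_cases hwv : w ∈ span ℝ {v}
    · exact mem_sup_right hwv
    obtain ⟨u, huB, huTl, huvw⟩ := hpair v (hSB hvS) w (hSB hwS) (hSTh (subset_span hvS)) hvTl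
      (hSTh (subset_span hwS)) hwTl hwv
    have huv : u ∉ span ℝ {v} := fun h =>
      hB0 u huB ((mem_bot ℝ).1 (hdisj ▸ mem_inf.2 ⟨h, huTl⟩))
    have hwuv : w ∈ span ℝ {u, v} :=
      mem_span_insert_exchange (by rwa [Set.pair_comm]) huv
    rw [span_insert] at hwuv
    have huS : u ∈ span ℝ (S : Set (V n)) :=
      span_mono (Set.insert_subset_iff.2 ⟨hvS, Set.singleton_subset_iff.2 hwS⟩) huvw
    exact sup_le_sup_right ((span_singleton_le_iff_mem _ _).2 (hS'mem huB huTl huS)) _ hwuv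
  refine ⟨S', Finset.filter_subset _ _, le_antisymm hS' ?_⟩
  calc Tl ⊓ span ℝ (S : Set (V n))
      ≤ (span ℝ (S' : Set (V n)) ⊔ span ℝ {v}) ⊓ Tl := le_inf (inf_le_right.trans key) inf_le_left
    _ = span ℝ (S' : Set (V n)) := by
      rw [sup_inf_assoc_of_le _ (hS'.trans inf_le_left), hdisj, sup_bot_eq]

theorem isSpannedBy_inf_of_pairClosed_chain {B : Finset (V n)} (hB0 : ∀ b ∈ B, b ≠ 0)
    {T : ℕ → Submodule ℝ (V n)} (hT : Monotone T) {r : ℕ}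
    (hpair : ∀ j < r, PairClosed B (T j) (T (j + 1))) (hBT : span ℝ (B : Set (V n)) ≤ T r)
    {S : Finset (V n)} (hSB : S ⊆ B) {i : ℕ} (hi : i ≤ r) :
    IsSpannedBy B (T i ⊓ span ℝ (S : Set (V n))) := by
  induction hi using Nat.decreasingInduction with
  | self => exact ⟨S, hSB, (inf_eq_right.2 ((span_mono (by exact_mod_cast hSB)).trans hBT)).symm⟩
  | of_succ j hj ih =>
    obtain ⟨S₁, hS₁B, hS₁⟩ := ih
    have h : T j ⊓ span ℝ (S : Set (V n)) = T j ⊓ span ℝ (S₁ : Set (V n)) := by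
      rw [hS₁, ← inf_assoc, inf_eq_left.2 (hT j.le_succ)]
    exact h ▸ isSpannedBy_inf_of_pairClosed hB0 (hpair j hj) hS₁B (hS₁ ▸ inf_le_left)

theorem exists_ne_zero_mem_inf_span_pair {Tl Th : Submodule ℝ (V n)} (hle : Tl ≤ Th)
    (hstep : finrank ℝ Th ≤ finrank ℝ Tl + 1) {v w : V n} (hvTh : v ∈ Th) (hvTl : v ∉ Tl)
    (hwTh : w ∈ Th) (hwv : w ∉ span ℝ {v}) : ∃ u, u ≠ 0 ∧ u ∈ Tl ⊓ span ℝ {v, w} := by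
  have hTh : Tl ⊔ span ℝ {v} = Th :=
    eq_of_le_of_finrank_le (sup_le hle ((span_singleton_le_iff_mem _ _).2 hvTh))
      (by rwa [finrank_sup_span_singleton hvTl])
  obtain ⟨t, htTl, y, hyv, rfl⟩ := mem_sup.1 (hTh ▸ hwTh)
  refine ⟨t, fun ht => hwv (by rwa [ht, zero_add]), htTl, ?_⟩
  have hy : y ∈ span ℝ {v, t + y} := span_mono (by simp) hyv
  simpa using sub_mem (subset_span (by simp) : t + y ∈ span ℝ {v, t + y}) hy

theorem exists_pairClosed_superset {T : ℕ → Submodule ℝ (V n)} (hT : Monotone T) (r : ℕ)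
    (hstep : ∀ j < r, finrank ℝ (T (j + 1)) ≤ finrank ℝ (T j) + 1) (C : Finset (V n))
    (hC0 : ∀ c ∈ C, c ≠ 0) (hCT : ∀ c ∈ C, c ∈ T r) :
    ∃ D, C ⊆ D ∧ (∀ d ∈ D, d ≠ 0) ∧ (∀ d ∈ D, d ∈ T r) ∧
      ∀ j < r, PairClosed D (T j) (T (j + 1)) := by
  induction r generalizing C with
  | zero => exact ⟨C, subset_rfl, hC0, hCT, fun j hj => absurd hj j.not_lt_zero⟩
  | succ r ih =>
    set P := (C ×ˢ C).filter (fun p => p.1 ∉ T r ∧ p.2 ∉ span ℝ {p.1})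
    have hpick (p : V n × V n) : ∃ u, p ∈ P → u ≠ 0 ∧ u ∈ T r ⊓ span ℝ {p.1, p.2} := by
      by_cases hp : p ∈ P
      · obtain ⟨hpC, hp1, hp2⟩ := Finset.mem_filter.1 hp
        obtain ⟨u, hu⟩ := exists_ne_zero_mem_inf_span_pair (hT r.le_succ) (hstep r r.lt_succ_self)
          (hCT _ (Finset.mem_product.1 hpC).1) hp1 (hCT _ (Finset.mem_product.1 hpC).2) hp2
        exact ⟨u, fun _ => hu⟩
      · exact ⟨0, fun h => absurd h hp⟩
    choose f hf using hpick
    -- the top level is settled by `f`; the vectors it adds all lie in `T r`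
    obtain ⟨D, hD, hD0, hDT, hDpair⟩ := ih (fun j hj => hstep j (by omega))
      (C.filter (· ∈ T r) ∪ P.image f)
      (by
        simp only [Finset.mem_union, Finset.mem_filter, Finset.mem_image]
        rintro c (⟨hc, -⟩ | ⟨p, hp, rfl⟩)
        exacts [hC0 c hc, (hf p hp).1])
      (by
        simp only [Finset.mem_union, Finset.mem_filter, Finset.mem_image]
        rintro c (⟨-, hc⟩ | ⟨p, hp, rfl⟩)
        exacts [hc, (mem_inf.1 (hf p hp).2).1])
    have hlow {d} (hd : d ∈ C ∪ D) (hdT : d ∈ T r) : d ∈ D :=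
      (Finset.mem_union.1 hd).elim (fun hdC => hD (by simp [hdC, hdT])) id
    have htop {d} (hd : d ∈ C ∪ D) (hdT : d ∉ T r) : d ∈ C :=
      (Finset.mem_union.1 hd).resolve_right fun hdD => hdT (hDT d hdD)
    refine ⟨C ∪ D, Finset.subset_union_left, ?_, ?_, ?_⟩
    · simp only [Finset.mem_union]
      rintro d (hd | hd)
      exacts [hC0 d hd, hD0 d hd]
    · simp only [Finset.mem_union]
      rintro d (hd | hd)
      exacts [hCT d hd, hT r.le_succ (hDT d hd)]
    · intro j hj v hv w hw hvTh hvTl hwTh hwTl hwv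
      rcases Nat.lt_succ_iff_lt_or_eq.1 hj with hj | rfl
      · have hjr : T (j + 1) ≤ T r := hT hj
        obtain ⟨u, huD, hu⟩ := hDpair j hj v (hlow hv (hjr hvTh)) w (hlow hw (hjr hwTh))
          hvTh hvTl hwTh hwTl hwv
        exact ⟨u, Finset.mem_union_right _ huD, hu⟩
      · have hp : (v, w) ∈ P :=
          Finset.mem_filter.2 ⟨Finset.mem_product.2 ⟨htop hv hvTl, htop hw hwTl⟩, hvTl, hwv⟩
        have hfD : f (v, w) ∈ D := hD (Finset.mem_union_right _ (Finset.mem_image_of_mem f hp))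
        exact ⟨f (v, w), Finset.mem_union_right _ hfD, (hf _ hp).2⟩

theorem IsArrangement.insert_of_span_ne {B : Finset (V n)} (hB : IsArrangement B) {x : V n}
    (hx0 : x ≠ 0) (hx : ∀ b ∈ B, span ℝ {b} ≠ span ℝ {x}) : IsArrangement (insert x B) := by
  refine ⟨by simpa [hx0] using hB.1, ?_⟩
  simp only [Finset.mem_insert]
  rintro u (rfl | hu) w (rfl | hw) huw
  · rfl
  · exact absurd huw.span_singleton_eq.symm (hx w hw)
  · exact absurd huw.span_singleton_eq (hx u hu)
  · exact hB.2 u hu w hw huw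

theorem IsArrangement.exists_extension_representing {A : Finset (V n)} (hA : IsArrangement A)
    (D : Finset (V n)) (hD0 : ∀ d ∈ D, d ≠ 0) :
    ∃ B ⊆ A ∪ D, IsArrangement B ∧ A ⊆ B ∧ ∀ d ∈ D, ∃ b ∈ B, span ℝ {b} = span ℝ {d} := by
  induction D using Finset.induction_on with
  | empty => exact ⟨A, by simp, hA, subset_rfl, by simp⟩
  | insert x D _ ih =>
    obtain ⟨B, hBAD, hB, hAB, hlines⟩ := ih fun d hd => hD0 d (Finset.mem_insert_of_mem hd)
    have hAD : A ∪ D ⊆ A ∪ insert x D := Finset.union_subset_union_right (Finset.subset_insert _ _)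
    by_cases hxB : ∃ b ∈ B, span ℝ {b} = span ℝ {x}
    · exact ⟨B, hBAD.trans hAD, hB, hAB, Finset.forall_mem_insert _ _ _ |>.2 ⟨hxB, hlines⟩⟩
    push Not at hxB
    refine ⟨insert x B, Finset.insert_subset (by simp) (hBAD.trans hAD),
      hB.insert_of_span_ne (hD0 x (Finset.mem_insert_self x D)) hxB,
      hAB.trans (Finset.subset_insert _ _), ?_⟩
    refine Finset.forall_mem_insert _ _ _ |>.2 ⟨⟨x, Finset.mem_insert_self x B, rfl⟩, ?_⟩
    intro d hd
    obtain ⟨b, hb, hbd⟩ := hlines d hd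
    exact ⟨b, Finset.mem_insert_of_mem hb, hbd⟩

theorem exists_flag_isSpannedBy (A : Finset (V n)) :
    ∃ T : ℕ → Submodule ℝ (V n), Monotone T ∧ (∀ i ≤ rankA A, finrank ℝ (T i) = i) ∧
      ∀ i, IsSpannedBy A (T i) := by
  induction A using Finset.induction_on with
  | empty =>
    have hrank : rankA (∅ : Finset (V n)) = 0 := by simp [rankA]
    refine ⟨fun _ => ⊥, monotone_const, fun i hi => ?_, fun _ => ⟨∅, subset_rfl, by simp⟩⟩
    rw [finrank_bot]
    omega
  | insert a A _ ih =>
    obtain ⟨T, hT, hfin, hspan⟩ := ih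
    have hspan_insert : span ℝ ((insert a A : Finset (V n)) : Set (V n)) =
        span ℝ (A : Set (V n)) ⊔ span ℝ {a} := by
      rw [Finset.coe_insert, span_insert, sup_comm]
    by_cases haA : a ∈ span ℝ (A : Set (V n))
    · have hrank : rankA (insert a A) = rankA A := by
        rw [rankA, rankA, hspan_insert, sup_eq_left.2 ((span_singleton_le_iff_mem _ _).2 haA)]
      exact ⟨T, hT, hrank ▸ hfin, fun i => (hspan i).mono (Finset.subset_insert _ _)⟩
    have hrank : rankA (insert a A) = rankA A + 1 := by
      rw [rankA, rankA, hspan_insert, finrank_sup_span_singleton haA]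
    set T' : ℕ → Submodule ℝ (V n) := fun i =>
      if i ≤ rankA A then T i else span ℝ ((insert a A : Finset (V n)) : Set (V n))
    have hT'_of_le {i} (hi : i ≤ rankA A) : T' i = T i := if_pos hi
    have hT'_of_lt {i} (hi : rankA A < i) :
        T' i = span ℝ ((insert a A : Finset (V n)) : Set (V n)) :=
      if_neg (by omega)
    refine ⟨T', fun i j hij => ?_, fun i hi => ?_, fun i => ?_⟩
    · rcases le_or_gt j (rankA A) with hj | hj
      · rw [hT'_of_le hj, hT'_of_le (hij.trans hj)]
        exact hT hij
      rw [hT'_of_lt hj]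
      rcases le_or_gt i (rankA A) with hi | hi
      · rw [hT'_of_le hi]
        exact (hspan i).le_span.trans (span_mono (by simp))
      · rw [hT'_of_lt hi]
    · rcases le_or_gt i (rankA A) with hir | hir
      · rw [hT'_of_le hir]
        exact hfin i hir
      · rw [hT'_of_lt hir]
        exact hrank.trans (by omega)
    · rcases le_or_gt i (rankA A) with hir | hir
      · rw [hT'_of_le hir]
        exact (hspan i).mono (Finset.subset_insert _ _)
      · rw [hT'_of_lt hir]
        exact ⟨_, subset_rfl, rfl⟩

theorem isSupersolvable_of_pairClosed_flag {B : Finset (V n)} (hB0 : ∀ b ∈ B, b ≠ 0)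
    {T : ℕ → Submodule ℝ (V n)} (hT : Monotone T) (hfin : ∀ i ≤ rankA B, finrank ℝ (T i) = i)
    (hspan : ∀ i, IsSpannedBy B (T i)) (hpair : ∀ j < rankA B, PairClosed B (T j) (T (j + 1))) :
    IsSupersolvable B := by
  have hTr : span ℝ (B : Set (V n)) ≤ T (rankA B) :=
    (eq_of_le_of_finrank_eq (hspan _).le_span (hfin _ le_rfl)).ge
  refine ⟨fun i => orth (T i), ?_, fun i => ?_, fun i j hij => orth_antitone (hT hij), fun i => ?_⟩
  · show orth (T 0) = ⊤
    rw [finrank_eq_zero.1 (hfin 0 (Nat.zero_le _)), orth_bot]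
  · exact isModular_orth (hspan i) fun S hSB =>
      isSpannedBy_inf_of_pairClosed_chain hB0 hT hpair hTr hSB (Nat.lt_succ_iff.1 i.isLt)
  · rw [finrank_orth, hfin _ (Nat.lt_succ_iff.1 i.isLt)]

end

theorem exists_supersolvable_extension {n : ℕ} (A : Finset (V n)) (hA : IsArrangement A) :
    ∃ B : Finset (V n), IsArrangement B ∧ A ⊆ B ∧ IsSupersolvable B ∧ rankA B = rankA A := by
  obtain ⟨T, hT, hfin, hspan⟩ := exists_flag_isSpannedBy A
  have hTA : T (rankA A) = span ℝ (A : Set (V n)) :=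
    eq_of_le_of_finrank_eq (hspan _).le_span (hfin _ le_rfl)
  obtain ⟨D, hAD, hD0, hDT, hDpair⟩ := exists_pairClosed_superset hT (rankA A)
    (fun j hj => by rw [hfin j hj.le, hfin (j + 1) hj]) A hA.1
    (fun a ha => hTA ▸ subset_span ha)
  obtain ⟨B, hBD, hB, hAB, hlines⟩ := hA.exists_extension_representing D hD0
  rw [Finset.union_eq_right.2 hAD] at hBD
  have hspanB : span ℝ (B : Set (V n)) = span ℝ (A : Set (V n)) :=
    le_antisymm (span_le.2 fun b hb => hTA ▸ hDT b (hBD hb)) (span_mono (by exact_mod_cast hAB))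
  have hrank : rankA B = rankA A := by rw [rankA, rankA, hspanB]
  refine ⟨B, hB, hAB, ?_, hrank⟩
  exact isSupersolvable_of_pairClosed_flag hB.1 hT (hrank ▸ hfin)
    (fun i => (hspan i).mono hAB) (hrank ▸ fun j hj => (hDpair j hj).of_subset hBD hlines)
end

section
/- Let A be a supersolvable real central hyperplane arrangement with fundamental chamber c₀ incident to a modular flag. Then a subset I ⊆ A is biclosed if and only if I = S(c₀,c) for some chamber c. -/
open Matrix
open scoped Classical

/-!
Flip the signs of `c₀` exactly on `I`; the task is to realize this sign vector by a point.
Sweep along the modular flag `⊤ = X₀ > X₁ > ⋯ > X_r`. Suppose `x` realizes it on the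
hyperplanes containing `X_i`. A point `y ∈ X_i` incident to `c₀` vanishes on these and has the
sign of `c₀` on the hyperplanes added at step `i + 1`, so along the line `x + s • y` the old
signs are kept and each new hyperplane `H` is crossed once, at a parameter `s_H`. It suffices to
stop after every crossing of a new hyperplane outside `I` and before every crossing of one in `I`.
For new hyperplanes `H ∈ I` and `H' ∉ I`, modularity of `X_i` yields an old hyperplane `H₀`
through `H ∩ H'`, and biclosedness of `I` at `H ∩ H'`, read off on the three lines `H, H', H₀`,
forces `s_{H'} < s_H`.
-/

namespace HypArrangement

variable {n : ℕ}

lemma hypl_apply (v x : V n) : hypl v x = v ⬝ᵥ x := rfl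

lemma hypl_ne_zero {v : V n} (hv : v ≠ 0) : hypl v ≠ 0 :=
  (LinearEquiv.map_ne_zero_iff (dotProductEquiv ℝ (Fin n))).mpr hv

lemma finrank_ker_hypl_add_one {v : V n} (hv : v ≠ 0) :
    Module.finrank ℝ (LinearMap.ker (hypl v)) + 1 = n := by
  simpa using Module.Dual.finrank_ker_add_one_of_ne_zero (hypl_ne_zero hv)

lemma finrank_finsetInf_ker_add_rankA (A : Finset (V n)) :
    Module.finrank ℝ ↥(A.inf fun v => LinearMap.ker (hypl v)) + rankA A = n := by
  have hspan : (Submodule.span ℝ (A : Set (V n))).map (dotProductEquiv ℝ (Fin n)).toLinearMap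
      = Submodule.span ℝ (hypl '' (A : Set (V n))) := by
    rw [Submodule.map_span]; rfl
  have hinf : (A.inf fun v => LinearMap.ker (hypl v))
      = (Submodule.span ℝ (hypl '' (A : Set (V n)))).dualCoannihilator := by
    ext x
    rw [← SetLike.mem_coe (x := x) (p := Submodule.dualCoannihilator _),
      Submodule.coe_dualCoannihilator_span, Submodule.mem_finsetInf]
    simp [hypl_apply]
  have hrank : Module.finrank ℝ (Submodule.span ℝ (hypl '' (A : Set (V n)))) = rankA A := by
    rw [← hspan, LinearEquiv.finrank_map_eq, rankA]
  have := Subspace.finrank_add_finrank_dualCoannihilator_eq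
    (Submodule.span ℝ (hypl '' (A : Set (V n))))
  rw [hinf]
  simp only [Module.Dual, Module.finrank_fin_fun] at this
  omega

lemma eq_of_ker_hypl_le {A : Finset (V n)} (hA : IsArrangement A) {u w : V n} (hu : u ∈ A)
    (hw : w ∈ A) (h : LinearMap.ker (hypl u) ≤ LinearMap.ker (hypl w)) : u = w := by
  have hrank := (finrank_ker_hypl_add_one (hA.1 u hu)).trans
    (finrank_ker_hypl_add_one (hA.1 w hw)).symm
  have heq := Submodule.eq_of_le_of_finrank_eq h (by omega)
  exact hA.2 u hu w hw fun x => by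
    simpa only [LinearMap.mem_ker, hypl_apply] using SetLike.ext_iff.mp heq x

lemma linearIndependent_pair {A : Finset (V n)} (hA : IsArrangement A) {u w : V n} (hu : u ∈ A)
    (hw : w ∈ A) (hne : u ≠ w) : LinearIndependent ℝ ![u, w] := by
  refine (LinearIndependent.pair_iff' (hA.1 u hu)).mpr fun a hau => hne ?_
  refine eq_of_ker_hypl_le hA hu hw fun x hx => ?_
  rw [LinearMap.mem_ker, hypl_apply] at hx ⊢
  rw [← hau, smul_dotProduct, hx, smul_zero]

lemma finrank_ker_inf_ker_add_two_le {A : Finset (V n)} (hA : IsArrangement A) {u w : V n}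
    (hu : u ∈ A) (hw : w ∈ A) (hne : u ≠ w) :
    Module.finrank ℝ ↥(LinearMap.ker (hypl u) ⊓ LinearMap.ker (hypl w)) + 2 ≤ n := by
  have hlt : LinearMap.ker (hypl u) ⊓ LinearMap.ker (hypl w) < LinearMap.ker (hypl u) :=
    inf_le_left.lt_of_ne fun h => hne (eq_of_ker_hypl_le hA hu hw (h ▸ inf_le_right))
  have := Submodule.finrank_lt_finrank_of_lt hlt
  have := finrank_ker_hypl_add_one (hA.1 u hu)
  omega

lemma exists_eq_add_of_ker_le {u w v : V n} (h : ∀ x, u ⬝ᵥ x = 0 → w ⬝ᵥ x = 0 → v ⬝ᵥ x = 0) :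
    ∃ α β : ℝ, ∀ x, v ⬝ᵥ x = α * (u ⬝ᵥ x) + β * (w ⬝ᵥ x) := by
  have hker : ⨅ i, LinearMap.ker (![hypl u, hypl w] i) ≤ LinearMap.ker (hypl v) := by
    intro x hx
    simp only [Submodule.mem_iInf, Fin.forall_fin_two, LinearMap.mem_ker] at hx
    exact h x hx.1 hx.2
  obtain ⟨c, hc⟩ :=
    (Submodule.mem_span_range_iff_exists_fun ℝ).mp (mem_span_of_iInf_ker_le_ker hker)
  refine ⟨c 0, c 1, fun x => ?_⟩
  simpa [Fin.sum_univ_two, hypl_apply] using (LinearMap.congr_fun hc x).symm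

/-- The parameter `s` at which the line `x + s • y` meets the hyperplane `v ⬝ᵥ · = 0`. -/
noncomputable def crossingParam (x y v : V n) : ℝ := -(v ⬝ᵥ x) / (v ⬝ᵥ y)

-- The scalar core of `crossingParam_lt_of_ker_le`: `a, zu, p` and `b, zw, q` are the values
-- of `u` and `w` at `y, z, x`, and `v₀ = α • u + β • w`.
lemma neg_div_lt_neg_div_of_crossing {a b α β p q zu zw : ℝ}
    (hy : α * a + β * b = 0) (hzu : zu * a < 0) (hzw : 0 < zw * b)
    (hv : 0 < (α * zu + β * zw) * (α * p + β * q)) : -q / b < -p / a := by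
  have ha : a ≠ 0 := right_ne_zero_of_mul hzu.ne
  have hb : b ≠ 0 := right_ne_zero_of_mul hzw.ne'
  have hab : a * b ≠ 0 := mul_ne_zero ha hb
  have hz : (α * zu + β * zw) * (a * b) = α * a * (zu * b - zw * a) := by
    linear_combination zw * a * hy
  have hx : (α * p + β * q) * (a * b) = α * a * (p * b - q * a) := by
    linear_combination q * a * hy
  have hED : 0 < (α * a) ^ 2 * ((zu * b - zw * a) * (p * b - q * a)) := by
    have := mul_pos hv (sq_pos_of_ne_zero hab)
    linear_combination this + (α * p + β * q) * (a * b) * hz + α * a * (zu * b - zw * a) * hx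
  have hE : (zu * b - zw * a) * (a * b) < 0 := by
    nlinarith [mul_pos hzw (mul_self_pos.mpr ha), mul_neg_of_neg_of_pos hzu (mul_self_pos.mpr hb)]
  have hD : (p * b - q * a) * (a * b) < 0 := by
    by_contra! h
    nlinarith [mul_nonneg (mul_nonneg (sq_nonneg (α * a)) (sq_nonneg (zu * b - zw * a))) h]
  have hgoal : -q / b - -p / a = (p * b - q * a) * (a * b) / (a * b) ^ 2 := by
    field_simp
    ring
  linarith [div_neg_of_neg_of_pos hD (sq_pos_of_ne_zero hab)]

lemma crossingParam_lt_of_ker_le {u w v₀ x y z : V n}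
    (hv₀ : ∀ t, u ⬝ᵥ t = 0 → w ⬝ᵥ t = 0 → v₀ ⬝ᵥ t = 0) (hv₀y : v₀ ⬝ᵥ y = 0)
    (huz : (u ⬝ᵥ z) * (u ⬝ᵥ y) < 0) (hwz : 0 < (w ⬝ᵥ z) * (w ⬝ᵥ y))
    (hvzx : 0 < (v₀ ⬝ᵥ z) * (v₀ ⬝ᵥ x)) :
    crossingParam x y w < crossingParam x y u := by
  obtain ⟨α, β, hαβ⟩ := exists_eq_add_of_ker_le hv₀
  rw [hαβ, hαβ] at hvzx
  exact neg_div_lt_neg_div_of_crossing ((hαβ y).symm.trans hv₀y) huz hwz hvzx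

lemma mul_pos_of_sign {s : Bool} {a b : ℝ} (ha : if s then 0 < a else a < 0)
    (hb : if s then 0 < b else b < 0) : 0 < a * b := by
  cases s
  · exact mul_pos_of_neg_of_neg ha hb
  · exact mul_pos ha hb

lemma mul_neg_of_sign_not {s : Bool} {a b : ℝ} (ha : if !s then 0 < a else a < 0)
    (hb : if s then 0 < b else b < 0) : a * b < 0 := by
  cases s
  · exact mul_neg_of_pos_of_neg ha hb
  · exact mul_neg_of_neg_of_pos ha hb

lemma sign_add_mul {a b s : ℝ} {c c₀ : Bool} (hb : if c₀ then 0 < b else b < 0)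
    (hs : if c = c₀ then -a / b < s else s < -a / b) :
    if c then 0 < a + s * b else a + s * b < 0 := by
  cases c <;> cases c₀ <;> simp only [Bool.false_eq_true, if_true, if_false] at hb hs ⊢
  · have := (div_lt_iff_of_neg hb).mp hs; linarith
  · have := (lt_div_iff₀ hb).mp hs; linarith
  · have := (lt_div_iff_of_neg hb).mp hs; linarith
  · have := (div_lt_iff₀ hb).mp hs; linarith

lemma exists_realizes_union_add_smul {B F : Finset (V n)} {c c₀ : V n → Bool} {x y : V n}
    (hx : Realizes B c x) (hyB : ∀ v ∈ B, v ⬝ᵥ y = 0) (hyF : Realizes F c₀ y)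
    (hcross : ∀ u ∈ F, ∀ w ∈ F, c u ≠ c₀ u → c w = c₀ w →
      crossingParam x y w < crossingParam x y u) :
    ∃ s : ℝ, Realizes (B ∪ F) c (x + s • y) := by
  obtain ⟨s, hkept, hflipped⟩ := Finset.exists_between'
    ((F.filter fun v => c v = c₀ v).image (crossingParam x y))
    ((F.filter fun v => c v ≠ c₀ v).image (crossingParam x y)) (by
      simp only [Finset.mem_image, Finset.mem_filter]
      rintro _ ⟨w, ⟨hw, hcw⟩, rfl⟩ _ ⟨u, ⟨hu, hcu⟩, rfl⟩
      exact hcross u hu w hw hcu hcw)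
  refine ⟨s, fun v hv => ?_⟩
  rw [dotProduct_add, dotProduct_smul, smul_eq_mul]
  rcases Finset.mem_union.mp hv with hvB | hvF
  · rw [hyB v hvB, mul_zero, add_zero]
    exact hx v hvB
  · refine sign_add_mul (hyF v hvF) ?_
    split_ifs with hcv
    · exact hkept _ (Finset.mem_image_of_mem _ (Finset.mem_filter.mpr ⟨hvF, hcv⟩))
    · exact hflipped _ (Finset.mem_image_of_mem _ (Finset.mem_filter.mpr ⟨hvF, hcv⟩))

noncomputable def localize (A : Finset (V n)) (X : Submodule ℝ (V n)) : Finset (V n) :=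
  A.filter fun v => X ≤ LinearMap.ker (hypl v)

lemma localize_top {A : Finset (V n)} (hA : IsArrangement A) : localize A ⊤ = ∅ :=
  Finset.filter_eq_empty_iff.mpr fun v hv htop =>
    hypl_ne_zero (hA.1 v hv) (LinearMap.ker_eq_top.mp (top_le_iff.mp htop))

lemma localize_anti (A : Finset (V n)) {X X' : Submodule ℝ (V n)} (h : X' ≤ X) :
    localize A X ⊆ localize A X' :=
  Finset.monotone_filter_right _ fun _ _ hv => h.trans hv

lemma localize_last_eq {A : Finset (V n)} {X : Fin (rankA A + 1) → Submodule ℝ (V n)}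
    (hX : IsModularFlag A X) : localize A (X (Fin.last _)) = A := by
  obtain ⟨S, hSA, hS⟩ := (hX.2.1 (Fin.last _)).1
  have hle : (A.inf fun v => LinearMap.ker (hypl v)) ≤ X (Fin.last _) :=
    hS ▸ Finset.inf_mono hSA
  have heq := Submodule.eq_of_le_of_finrank_eq hle (by
    have := hX.2.2.2 (Fin.last _)
    have := finrank_finsetInf_ker_add_rankA A
    simp only [Fin.val_last] at *
    omega)
  exact Finset.filter_eq_self.mpr fun v hv => heq ▸ Finset.inf_le hv

lemma exists_mem_localize_mem_loc {A : Finset (V n)} (hA : IsArrangement A)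
    {X X' : Submodule ℝ (V n)} (hX : IsModular A X) (hX'X : X' ≤ X)
    (hrank : Module.finrank ℝ X' + 1 = Module.finrank ℝ X) {u w : V n}
    (hu : u ∈ localize A X') (hw : w ∈ localize A X') (hne : u ≠ w) :
    ∃ v₀ ∈ localize A X, v₀ ∈ loc A u w := by
  rw [localize, Finset.mem_filter] at hu hw
  set Y := LinearMap.ker (hypl u) ⊓ LinearMap.ker (hypl w)
  have hY : Y ∈ InterLattice A :=
    ⟨{u, w}, Finset.insert_subset hu.1 (Finset.singleton_subset_iff.mpr hw.1), by
      rw [Finset.inf_insert, Finset.inf_singleton]⟩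
  obtain ⟨S, hSA, hS⟩ := hX.2 Y hY
  obtain ⟨v₀, hv₀⟩ : S.Nonempty := by
    rw [Finset.nonempty_iff_ne_empty]
    rintro rfl
    have hsup : Module.finrank ℝ ↥(X ⊔ Y) = n := by
      rw [hS, Finset.inf_empty, finrank_top, Module.finrank_fin_fun]
    have hinf := Submodule.finrank_mono (le_inf hX'X (show X' ≤ Y from le_inf hu.2 hw.2))
    have := Submodule.finrank_sup_add_finrank_inf_eq X Y
    have : Module.finrank ℝ Y + 2 ≤ n := finrank_ker_inf_ker_add_two_le hA hu.1 hw.1 hne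
    omega
  have hv₀X : X ⊔ Y ≤ LinearMap.ker (hypl v₀) := hS ▸ Finset.inf_le hv₀
  refine ⟨v₀, Finset.mem_filter.mpr ⟨hSA hv₀, le_sup_left.trans hv₀X⟩,
    Finset.mem_filter.mpr ⟨hSA hv₀, fun t hut hwt => ?_⟩⟩
  exact le_sup_right.trans hv₀X ⟨hut, hwt⟩

noncomputable def flipOn (I : Finset (V n)) (c₀ : V n → Bool) (v : V n) : Bool :=
  if v ∈ I then !c₀ v else c₀ v

lemma flipOn_ne_iff {I : Finset (V n)} {c₀ : V n → Bool} {v : V n} :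
    flipOn I c₀ v ≠ c₀ v ↔ v ∈ I := by
  unfold flipOn
  split_ifs with h <;> simp [h]

lemma sepSet_flipOn {A I : Finset (V n)} (hI : I ⊆ A) (c₀ : V n → Bool) :
    SepSet A c₀ (flipOn I c₀) = I := by
  ext v
  rw [SepSet, Finset.mem_filter, ne_comm, flipOn_ne_iff]
  exact ⟨And.right, fun hv => ⟨hI hv, hv⟩⟩

lemma eq_flipOn_of_inter_eq_sepSet {I L : Finset (V n)} {c₀ d : V n → Bool}
    (h : I ∩ L = SepSet L c₀ d) {v : V n} (hv : v ∈ L) : d v = flipOn I c₀ v := by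
  have hmem : v ∈ I ↔ c₀ v ≠ d v := by
    simpa [hv, SepSet] using congrArg (v ∈ ·) h
  unfold flipOn
  cases hc : c₀ v <;> cases hd : d v <;> simp_all

lemma crossingParam_lt_of_isBiclosed {A I B F : Finset (V n)} (hA : IsArrangement A)
    {c₀ : V n → Bool} (hI : IsBiclosed A c₀ I) (hFA : F ⊆ A) {x y : V n}
    (hx : Realizes B (flipOn I c₀) x) (hyB : ∀ v ∈ B, v ⬝ᵥ y = 0) (hy : Realizes F c₀ y)
    {u w v₀ : V n} (hu : u ∈ F) (hw : w ∈ F) (huI : u ∈ I) (hwI : w ∉ I) (hv₀B : v₀ ∈ B)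
    (hv₀ : v₀ ∈ loc A u w) : crossingParam x y w < crossingParam x y u := by
  have hne : u ≠ w := by rintro rfl; exact hwI huI
  obtain ⟨d, ⟨z, hz⟩, hsep⟩ :=
    hI u w ⟨hFA hu, hFA hw, linearIndependent_pair hA (hFA hu) (hFA hw) hne⟩
  have hu_loc : u ∈ loc A u w := Finset.mem_filter.mpr ⟨hFA hu, fun _ h _ => h⟩
  have hw_loc : w ∈ loc A u w := Finset.mem_filter.mpr ⟨hFA hw, fun _ _ h => h⟩
  have hzu := hz u hu_loc
  have hzw := hz w hw_loc
  have hzv₀ := hz v₀ hv₀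
  rw [eq_flipOn_of_inter_eq_sepSet hsep hu_loc, flipOn, if_pos huI] at hzu
  rw [eq_flipOn_of_inter_eq_sepSet hsep hw_loc, flipOn, if_neg hwI] at hzw
  rw [eq_flipOn_of_inter_eq_sepSet hsep hv₀] at hzv₀
  exact crossingParam_lt_of_ker_le (Finset.mem_filter.mp hv₀).2 (hyB v₀ hv₀B)
    (mul_neg_of_sign_not hzu (hy u hu)) (mul_pos_of_sign hzw (hy w hw))
    (mul_pos_of_sign hzv₀ (hx v₀ hv₀B))

lemma exists_realizes_localize_of_isBiclosed {A I : Finset (V n)} (hA : IsArrangement A)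
    {c₀ : V n → Bool} (hI : IsBiclosed A c₀ I) {X X' : Submodule ℝ (V n)} (hX : IsModular A X)
    (hinc : IncidentSub A c₀ X) (hX'X : X' ≤ X)
    (hrank : Module.finrank ℝ X' + 1 = Module.finrank ℝ X) {x : V n}
    (hx : Realizes (localize A X) (flipOn I c₀) x) :
    ∃ x', Realizes (localize A X') (flipOn I c₀) x' := by
  obtain ⟨y, hyX, hy⟩ := hinc
  set F := localize A X' \ localize A X
  have hFA : F ⊆ A := Finset.sdiff_subset.trans (Finset.filter_subset _ _)
  have hy0 : ∀ v ∈ localize A X, v ⬝ᵥ y = 0 := fun v hv => (Finset.mem_filter.mp hv).2 hyX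
  have hyF : Realizes F c₀ y := fun v hv =>
    hy v (hFA hv) fun h => (Finset.mem_sdiff.mp hv).2 (Finset.mem_filter.mpr ⟨hFA hv, h⟩)
  obtain ⟨s, hs⟩ := exists_realizes_union_add_smul hx hy0 hyF fun u hu w hw hcu hcw => by
    obtain ⟨v₀, hv₀X, hv₀⟩ := exists_mem_localize_mem_loc hA hX hX'X hrank
      (Finset.mem_sdiff.mp hu).1 (Finset.mem_sdiff.mp hw).1 (by rintro rfl; exact hcu hcw)
    exact crossingParam_lt_of_isBiclosed hA hI hFA hx hy0 hyF hu hw (flipOn_ne_iff.mp hcu)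
      (fun hwI => flipOn_ne_iff.mpr hwI hcw) hv₀X hv₀
  rw [Finset.union_sdiff_of_subset (localize_anti A hX'X)] at hs
  exact ⟨_, hs⟩

lemma exists_realizes_flipOn_localize {A I : Finset (V n)} (hA : IsArrangement A)
    {c₀ : V n → Bool} (hI : IsBiclosed A c₀ I) {X : Fin (rankA A + 1) → Submodule ℝ (V n)}
    (hX : IsModularFlag A X) (hinc : ∀ i, IncidentSub A c₀ (X i)) (i : Fin (rankA A + 1)) :
    ∃ x, Realizes (localize A (X i)) (flipOn I c₀) x := by
  obtain ⟨hX0, hmod, hanti, hrank⟩ := hX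
  induction i using Fin.induction with
  | zero => exact ⟨0, by simp [hX0, localize_top hA, Realizes]⟩
  | succ i ih =>
    obtain ⟨x, hx⟩ := ih
    refine exists_realizes_localize_of_isBiclosed hA hI (hmod _) (hinc _)
      (hanti _ _ (Fin.castSucc_le_succ i)) ?_ hx
    have := finrank_finsetInf_ker_add_rankA A
    rw [hrank, hrank, Fin.val_succ, Fin.val_castSucc]
    omega

lemma isBiclosed_sepSet {A : Finset (V n)} {c₀ c : V n → Bool} (hc : IsChamber A c) :
    IsBiclosed A c₀ (SepSet A c₀ c) := by
  obtain ⟨x, hx⟩ := hc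
  refine fun u w _ => ⟨c, ⟨x, fun v hv => hx v (Finset.mem_filter.mp hv).1⟩, ?_⟩
  ext v
  simp only [SepSet, loc, Finset.mem_inter, Finset.mem_filter]
  tauto

end HypArrangement

open HypArrangement

theorem supersolvable_biclosed_iff_separable_general {n : ℕ} (A : Finset (V n))
    (hA : IsArrangement A) (c₀ : V n → Bool)
    (hss : ∃ X : Fin (rankA A + 1) → Submodule ℝ (V n),
      IsModularFlag A X ∧ ∀ i, IncidentSub A c₀ (X i))
    (I : Finset (V n)) (hIA : I ⊆ A) :
    IsBiclosed A c₀ I ↔ ∃ c, IsChamber A c ∧ I = SepSet A c₀ c := by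
  refine ⟨fun hI => ?_, fun ⟨c, hc, hIc⟩ => hIc ▸ isBiclosed_sepSet hc⟩
  obtain ⟨X, hX, hinc⟩ := hss
  obtain ⟨x, hx⟩ := exists_realizes_flipOn_localize hA hI hX hinc (Fin.last _)
  rw [localize_last_eq hX] at hx
  exact ⟨flipOn I c₀, ⟨x, hx⟩, (sepSet_flipOn hIA c₀).symm⟩

theorem supersolvable_biclosed_iff_separable {n : ℕ} (A : Finset (V n))
    (hA : IsArrangement A) (c₀ : V n → Bool) (hc₀ : IsChamber A c₀)
    (hss : ∃ X : Fin (rankA A + 1) → Submodule ℝ (V n),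
      IsModularFlag A X ∧ ∀ i, IncidentSub A c₀ (X i))
    (I : Finset (V n)) (hIA : I ⊆ A) :
    IsBiclosed A c₀ I ↔ ∃ c, IsChamber A c ∧ I = SepSet A c₀ c :=
  supersolvable_biclosed_iff_separable_general A hA c₀ hss I hIA
end

section
/- Let A be a supersolvable real central hyperplane arrangement with fundamental chamber c₀ incident to a modular flag. Then for any two chambers c, d, the separation set S(c₀, c ∨ d) of the join in the chamber lattice equals the 2-closure of S(c₀,c) ∪ S(c₀,d). -/
open Matrix
open scoped Classical

/-!
Induction on `|A|`. Let `X` be the member of rank `r - 1` of the modular flag (`r = rank A`) and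
`A_X` the hyperplanes containing it: `A_X` is supersolvable of rank `r - 1` and `c₀` is incident
to the truncated flag, so by induction the 2-closure of `S(c₀, c) ∪ S(c₀, d)` in `A_X` is the
separation set of a chamber `m'` of `A_X`. As `X` is a modular coatom, the intersection of two
hyperplanes outside `A_X` lies on a hyperplane `v` of `A_X`; as `c₀` is incident to `X`, a
generic segment from `c₀` to `-c₀` crosses `v` first or last among the hyperplanes of that
rank-2 localization. Hence the separation sets of the chambers over `m'` form a chain in which
consecutive members differ by one hyperplane, and its least member containing
`S(c₀, c) ∪ S(c₀, d)` is forced, one hyperplane at a time, into every 2-closed set containing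
them.
-/

namespace Arrangement

variable {n : ℕ}

lemma exists_pos_forall_mul_lt {ι : Type*} (s : Finset ι) (f g : ι → ℝ)
    (hf : ∀ i ∈ s, 0 < f i) : ∃ δ > 0, ∀ i ∈ s, δ * g i < f i := by
  have h : ∀ᶠ δ in nhdsWithin (0 : ℝ) (Set.Ioi 0), ∀ i ∈ s, δ * g i < f i := by
    rw [Filter.eventually_all_finset]
    intro i hi
    have : Filter.Tendsto (fun δ : ℝ => δ * g i) (nhdsWithin 0 (Set.Ioi 0)) (nhds 0) := by
      simpa using ((continuous_mul_const (g i)).tendsto (0 : ℝ)).mono_left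
        (nhdsWithin_le_nhds (s := Set.Ioi 0))
    exact this.eventually_lt_const (hf i hi)
  obtain ⟨δ, h, hδ⟩ := (h.and self_mem_nhdsWithin).exists
  exact ⟨δ, hδ, h⟩

lemma exists_forall_pos_add_mul {ι : Type*} (s : Finset ι) (f g : ι → ℝ)
    (hg : ∀ i ∈ s, 0 < g i) : ∃ M : ℝ, ∀ i ∈ s, 0 < f i + M * g i := by
  have h : ∀ᶠ M in Filter.atTop, ∀ i ∈ s, 0 < f i + M * g i := by
    rw [Filter.eventually_all_finset]
    exact fun i hi => (Filter.tendsto_atTop_add_const_left _ _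
      (Filter.tendsto_id.atTop_mul_const (hg i hi))).eventually_gt_atTop 0
  exact h.exists

lemma exists_least_of_isChain {α : Type*} {F : Finset (Finset α)}
    (hF : IsChain (· ⊆ ·) (F : Set (Finset α))) {p : Finset α → Prop} (h : ∃ T ∈ F, p T) :
    ∃ T ∈ F, p T ∧ ∀ T' ∈ F, p T' → T ⊆ T' := by
  obtain ⟨T, hT, hmin⟩ := (F.filter p).exists_min_image Finset.card
    (h.imp fun T hT => Finset.mem_filter.2 hT)
  obtain ⟨hTF, hpT⟩ := Finset.mem_filter.1 hT
  refine ⟨T, hTF, hpT, fun T' hT' hpT' => ?_⟩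
  rcases hF.total hTF hT' with h | h
  · exact h
  · exact (Finset.eq_of_subset_of_card_le h (hmin T' (Finset.mem_filter.2 ⟨hT', hpT'⟩))).ge

lemma exists_greatest_of_isChain {α : Type*} {F : Finset (Finset α)}
    (hF : IsChain (· ⊆ ·) (F : Set (Finset α))) {p : Finset α → Prop} (h : ∃ T ∈ F, p T) :
    ∃ T ∈ F, p T ∧ ∀ T' ∈ F, p T' → T' ⊆ T := by
  obtain ⟨T, hT, hmax⟩ := (F.filter p).exists_max_image Finset.card
    (h.imp fun T hT => Finset.mem_filter.2 hT)
  obtain ⟨hTF, hpT⟩ := Finset.mem_filter.1 hT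
  refine ⟨T, hTF, hpT, fun T' hT' hpT' => ?_⟩
  rcases hF.total hTF hT' with h | h
  · exact (Finset.eq_of_subset_of_card_le h (hmax T' (Finset.mem_filter.2 ⟨hT', hpT'⟩))).ge
  · exact h

/-- The normal `v`, oriented so that `c₀` lies on its positive side. -/
noncomputable def sgn (c₀ : V n → Bool) (v : V n) : V n := if c₀ v then v else -v

noncomputable def val (c₀ : V n → Bool) (v x : V n) : ℝ := sgn c₀ v ⬝ᵥ x

noncomputable def eps (c₀ : V n → Bool) (v : V n) : ℝ := if c₀ v then 1 else -1

section SignedValues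

variable (c₀ : V n → Bool)

lemma sgn_eq_smul (v : V n) : sgn c₀ v = eps c₀ v • v := by
  unfold sgn eps; split_ifs <;> simp

lemma eps_ne_zero (v : V n) : eps c₀ v ≠ 0 := by
  unfold eps; split_ifs <;> norm_num

lemma eps_mul_self (v : V n) : eps c₀ v * eps c₀ v = 1 := by
  unfold eps; split_ifs <;> norm_num

lemma val_eq (v x : V n) : val c₀ v x = if c₀ v then v ⬝ᵥ x else -(v ⬝ᵥ x) := by
  unfold val sgn; split_ifs <;> simp [neg_dotProduct]

lemma val_eq_zero_iff (v x : V n) : val c₀ v x = 0 ↔ v ⬝ᵥ x = 0 := by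
  rw [val_eq]; split_ifs <;> simp

lemma val_add (v x y : V n) : val c₀ v (x + y) = val c₀ v x + val c₀ v y :=
  dotProduct_add _ _ _

lemma val_neg (v x : V n) : val c₀ v (-x) = -val c₀ v x :=
  dotProduct_neg _ _

lemma val_sub (v x y : V n) : val c₀ v (x - y) = val c₀ v x - val c₀ v y :=
  dotProduct_sub _ _ _

lemma val_smul (v : V n) (t : ℝ) (x : V n) : val c₀ v (t • x) = t * val c₀ v x := by
  simp [val, dotProduct_smul]

lemma sgn_dotProduct_self (v : V n) : sgn c₀ v ⬝ᵥ sgn c₀ v = v ⬝ᵥ v := by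
  unfold sgn; split_ifs <;> simp

lemma continuous_dotProduct (v : V n) : Continuous fun x : V n => v ⬝ᵥ x :=
  continuous_finsetSum _ fun i _ => continuous_const.mul (continuous_apply i)

lemma continuous_val (v : V n) : Continuous fun x => val c₀ v x :=
  continuous_dotProduct _

end SignedValues

variable {A B L : Finset (V n)} {c₀ e : V n → Bool} {x : V n}

lemma _root_.Realizes.mono_s18 (h : Realizes A e x) (hBA : B ⊆ A) : Realizes B e x :=
  fun v hv => h v (hBA hv)

lemma _root_.IsChamber.mono_s18 (h : IsChamber A e) (hBA : B ⊆ A) : IsChamber B e :=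
  h.imp fun _ hx => hx.mono_s18 hBA

lemma _root_.Realizes.neg (h : Realizes A e x) : Realizes A (fun v => !e v) (-x) := by
  intro v hv
  have := h v hv
  cases e v <;> simp_all [dotProduct_neg]

lemma _root_.Realizes.val_ne_zero (hx : Realizes A e x) {v : V n} (hv : v ∈ A) :
    val c₀ v x ≠ 0 := by
  have := hx v hv
  rw [val_eq]; split_ifs at this ⊢ <;> simp at this ⊢ <;> linarith

lemma _root_.Realizes.val_pos_iff (hx : Realizes A e x) {v : V n} (hv : v ∈ A) :
    0 < val c₀ v x ↔ e v = c₀ v := by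
  have := hx v hv
  rw [val_eq]
  cases hc : c₀ v <;> cases he : e v <;> simp [he] at this ⊢ <;> linarith

lemma _root_.Realizes.val_neg_iff (hx : Realizes A e x) {v : V n} (hv : v ∈ A) :
    val c₀ v x < 0 ↔ e v ≠ c₀ v := by
  rw [Ne, ← hx.val_pos_iff hv, not_lt]
  exact (hx.val_ne_zero hv).le_iff_lt.symm

lemma _root_.Realizes.mem_sepSet_iff (hx : Realizes A e x) {v : V n} (hv : v ∈ A) :
    v ∈ SepSet A c₀ e ↔ val c₀ v x < 0 := by
  rw [hx.val_neg_iff hv, SepSet, Finset.mem_filter, ne_comm]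
  exact and_iff_right hv

lemma isOpen_setOf_realizes (A : Finset (V n)) (e : V n → Bool) :
    IsOpen {x | Realizes A e x} := by
  have : {x | Realizes A e x} = ⋂ v ∈ A, {x | if e v then 0 < v ⬝ᵥ x else v ⬝ᵥ x < 0} := by
    ext; simp [Realizes]
  rw [this]
  refine isOpen_biInter_finset fun v _ => ?_
  split_ifs
  · exact isOpen_lt continuous_const (continuous_dotProduct v)
  · exact isOpen_lt (continuous_dotProduct v) continuous_const

noncomputable def signs (x : V n) : V n → Bool := fun v => decide (0 < v ⬝ᵥ x)

lemma realizes_signs (h : ∀ v ∈ A, v ⬝ᵥ x ≠ 0) : Realizes A (signs x) x := by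
  intro v hv
  by_cases hp : 0 < v ⬝ᵥ x
  · simp [signs, hp]
  · simpa [signs, hp] using lt_of_le_of_ne (not_lt.1 hp) (h v hv)

lemma isChamber_signs (h : ∀ v ∈ A, v ⬝ᵥ x ≠ 0) : IsChamber A (signs x) :=
  ⟨x, realizes_signs h⟩

lemma mem_sepSet {c d : V n → Bool} {v : V n} : v ∈ SepSet A c d ↔ v ∈ A ∧ c v ≠ d v :=
  Finset.mem_filter

lemma sepSet_of_subset (hLA : L ⊆ A) : SepSet L c₀ e = SepSet A c₀ e ∩ L := by
  ext v
  simp only [mem_sepSet, Finset.mem_inter]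
  exact ⟨fun ⟨hvL, h⟩ => ⟨⟨hLA hvL, h⟩, hvL⟩, fun ⟨⟨_, h⟩, hvL⟩ => ⟨hvL, h⟩⟩

lemma _root_.Realizes.signs_eq (hx : Realizes A e x) {v : V n} (hv : v ∈ A) : signs x v = e v := by
  have := hx v hv
  unfold signs
  cases he : e v <;> simp only [he, if_true, Bool.false_eq_true, if_false] at this <;> simp [this,
    this.le.not_gt]

lemma signs_eq_iff {v : V n} (h : val c₀ v x ≠ 0) : signs x v = c₀ v ↔ 0 < val c₀ v x := by
  rw [val_eq] at h ⊢
  unfold signs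
  cases hc : c₀ v <;> simp only [hc, if_true, if_false, Bool.false_eq_true] at h ⊢
  · simp only [decide_eq_false_iff_not, not_lt, neg_pos]
    exact ⟨fun h1 => lt_of_le_of_ne h1 (by simpa using h), le_of_lt⟩
  · simp

lemma exists_dotProduct_ne_zero (F : Finset (V n)) (hF : ∀ q ∈ F, q ≠ 0)
    {U : Set (V n)} (hU : IsOpen U) (hUne : U.Nonempty) :
    ∃ y ∈ U, ∀ q ∈ F, q ⬝ᵥ y ≠ 0 := by
  have hdense : Dense (⋂ q ∈ F, {y : V n | q ⬝ᵥ y ≠ 0}) := by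
    refine dense_biInter_of_isOpen (fun q _ =>
      isOpen_ne_fun (continuous_dotProduct q) continuous_const) F.countable_toSet fun q hq => ?_
    have hker : ({y | q ⬝ᵥ y ≠ 0} : Set (V n)) = (LinearMap.ker (hypl q) : Set (V n))ᶜ := by
      ext; simp [hypl]
    rw [hker, ← interior_eq_empty_iff_dense_compl, ← Set.not_nonempty_iff_eq_empty]
    intro hint
    have h0 : hypl q = 0 :=
      LinearMap.ker_eq_top.1 ((LinearMap.ker _).eq_top_of_nonempty_interior' hint)
    exact hF q hq (funext fun i => by simpa [hypl] using LinearMap.congr_fun h0 (Pi.single i 1))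
  obtain ⟨y, hyU, hy⟩ := hdense.inter_open_nonempty U hU hUne
  exact ⟨y, hyU, by simpa using hy⟩

lemma linearIndependent_pair (hA : IsArrangement A) {u w : V n} (hu : u ∈ A) (hw : w ∈ A)
    (huw : u ≠ w) : LinearIndependent ℝ ![u, w] := by
  refine (LinearIndependent.pair_iff' (hA.1 u hu)).2 fun a hau =>
    huw (hA.2 u hu w hw fun x => ?_)
  have ha : a ≠ 0 := by rintro rfl; exact hA.1 w hw (by simp [← hau])
  simp [← hau, smul_dotProduct, ha]

section Orthogonality

@[simp] lemma hypl_apply (v x : V n) : hypl v x = v ⬝ᵥ x := rfl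

noncomputable def perpSpan (S : Finset (V n)) : Submodule ℝ (V n) :=
  S.inf fun v => LinearMap.ker (hypl v)

lemma mem_perpSpan {S : Finset (V n)} : x ∈ perpSpan S ↔ ∀ v ∈ S, v ⬝ᵥ x = 0 := by
  simp [perpSpan, Submodule.mem_finsetInf]

lemma perpSpan_antitone {S T : Finset (V n)} (h : S ⊆ T) : perpSpan T ≤ perpSpan S :=
  fun _ hx => mem_perpSpan.2 fun v hv => mem_perpSpan.1 hx v (h hv)

lemma perpSpan_le_ker {S : Finset (V n)} {v : V n} (hv : v ∈ S) :
    perpSpan S ≤ LinearMap.ker (hypl v) :=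
  fun _ hx => by simpa using mem_perpSpan.1 hx v hv

/-- Computes `perpSpan S` as the orthogonal complement of `span S`. -/
noncomputable def toEuclidean (n : ℕ) : V n ≃ₗ[ℝ] EuclideanSpace ℝ (Fin n) :=
  (WithLp.linearEquiv 2 ℝ (Fin n → ℝ)).symm

lemma inner_toEuclidean (u y : V n) :
    inner ℝ (toEuclidean n u) (toEuclidean n y) = u ⬝ᵥ y := by
  simp only [PiLp.inner_apply, RCLike.inner_apply, conj_trivial, dotProduct]
  exact Finset.sum_congr rfl fun i _ => mul_comm _ _

lemma map_perpSpan_toEuclidean (S : Finset (V n)) :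
    (perpSpan S).map (toEuclidean n).toLinearMap =
      ((Submodule.span ℝ (S : Set (V n))).map (toEuclidean n).toLinearMap)ᗮ := by
  ext y
  obtain ⟨x, rfl⟩ := (toEuclidean n).surjective y
  rw [Submodule.mem_map_equiv, LinearEquiv.symm_apply_apply, mem_perpSpan,
    Submodule.map_span, Submodule.mem_orthogonal']
  constructor
  · intro h u hu
    refine Submodule.span_induction (p := fun u _ => inner ℝ _ u = 0) ?_ (by simp)
      (fun a b _ _ ha hb => by rw [inner_add_right, ha, hb, add_zero])
      (fun r a _ ha => by rw [real_inner_smul_right, ha, mul_zero]) hu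
    rintro _ ⟨v, hv, rfl⟩
    rw [LinearEquiv.coe_coe, real_inner_comm, inner_toEuclidean]
    exact h v hv
  · intro h v hv
    rw [← inner_toEuclidean, real_inner_comm]
    exact h _ (Submodule.subset_span ⟨v, hv, rfl⟩)

lemma finrank_perpSpan_add_finrank_span (S : Finset (V n)) :
    Module.finrank ℝ (perpSpan S) + Module.finrank ℝ (Submodule.span ℝ (S : Set (V n))) = n := by
  have h := Submodule.finrank_add_finrank_orthogonal
    ((Submodule.span ℝ (S : Set (V n))).map (toEuclidean n).toLinearMap)
  rw [← map_perpSpan_toEuclidean, LinearEquiv.finrank_map_eq, LinearEquiv.finrank_map_eq,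
    finrank_euclideanSpace_fin] at h
  omega

lemma mem_span_of_perpSpan_le {S : Finset (V n)} {v : V n}
    (h : perpSpan S ≤ LinearMap.ker (hypl v)) : v ∈ Submodule.span ℝ (S : Set (V n)) := by
  set W := (Submodule.span ℝ (S : Set (V n))).map (toEuclidean n).toLinearMap
  have hv : toEuclidean n v ∈ Wᗮᗮ := by
    rw [← map_perpSpan_toEuclidean, Submodule.mem_orthogonal]
    rintro _ ⟨y, hy, rfl⟩
    rw [LinearEquiv.coe_coe, inner_toEuclidean, dotProduct_comm]
    simpa using h hy
  rw [Submodule.orthogonal_orthogonal] at hv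
  obtain ⟨y, hy, hyv⟩ := hv
  rwa [← (toEuclidean n).injective hyv]

lemma finrank_span_pair {u w : V n} (h : LinearIndependent ℝ ![u, w]) :
    Module.finrank ℝ (Submodule.span ℝ ({u, w} : Set (V n))) = 2 := by
  have hspan := finrank_span_eq_card h
  rwa [Matrix.range_cons_cons_empty, Fintype.card_fin] at hspan

lemma finrank_perpSpan_pair {u w : V n} (h : LinearIndependent ℝ ![u, w]) :
    Module.finrank ℝ (perpSpan {u, w}) + 2 = n := by
  have hspan := finrank_span_pair h
  have hsum := finrank_perpSpan_add_finrank_span {u, w}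
  rwa [Finset.coe_pair, hspan] at hsum

lemma finrank_perpSpan_add_rankA (A : Finset (V n)) :
    Module.finrank ℝ (perpSpan A) + rankA A = n :=
  finrank_perpSpan_add_finrank_span A

lemma rankA_le (A : Finset (V n)) : rankA A ≤ n := by
  have := finrank_perpSpan_add_rankA A; omega

end Orthogonality

section Sweep

/-- A segment from a point `x₀` on the positive side of every hyperplane of `L` to a point `y`
on the negative side of all of them, crossing the hyperplanes one at a time. -/
structure Sweep (c₀ : V n → Bool) (L : Finset (V n)) where
  x₀ : V n
  y : V n
  pos : ∀ v ∈ L, 0 < val c₀ v x₀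
  neg : ∀ v ∈ L, val c₀ v y < 0
  inj : ∀ a ∈ L, ∀ b ∈ L, a ≠ b →
    val c₀ a x₀ / (val c₀ a x₀ - val c₀ a y) ≠ val c₀ b x₀ / (val c₀ b x₀ - val c₀ b y)

variable (S : Sweep c₀ L)

noncomputable def Sweep.pt (s : ℝ) : V n := S.x₀ + s • (S.y - S.x₀)

/-- The parameter at which the segment crosses the hyperplane `v`. -/
noncomputable def Sweep.t (v : V n) : ℝ :=
  val c₀ v S.x₀ / (val c₀ v S.x₀ - val c₀ v S.y)

lemma Sweep.t_ne {a b : V n} (ha : a ∈ L) (hb : b ∈ L) (hab : a ≠ b) : S.t a ≠ S.t b :=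
  S.inj a ha b hb hab

lemma Sweep.val_x₀_sub_val_y_pos {v : V n} (hv : v ∈ L) : 0 < val c₀ v S.x₀ - val c₀ v S.y := by
  linarith [S.pos v hv, S.neg v hv]

lemma Sweep.t_mem_Ioo {v : V n} (hv : v ∈ L) : S.t v ∈ Set.Ioo 0 1 := by
  have hD := S.val_x₀_sub_val_y_pos hv
  refine ⟨div_pos (S.pos v hv) hD, (div_lt_one hD).2 ?_⟩
  linarith [S.neg v hv]

lemma Sweep.val_pt (v : V n) (s : ℝ) :
    val c₀ v (S.pt s) = val c₀ v S.x₀ + s * (val c₀ v S.y - val c₀ v S.x₀) := by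
  rw [Sweep.pt, val_add, val_smul, val_sub]

lemma Sweep.val_pt_eq {v : V n} (hv : v ∈ L) (s : ℝ) :
    val c₀ v (S.pt s) = (val c₀ v S.x₀ - val c₀ v S.y) * (S.t v - s) := by
  have hD := S.val_x₀_sub_val_y_pos hv
  rw [S.val_pt, Sweep.t]
  field_simp
  ring

lemma Sweep.val_pt_pos {v : V n} (hv : v ∈ L) {s : ℝ} (h : s < S.t v) :
    0 < val c₀ v (S.pt s) := by
  rw [S.val_pt_eq hv]
  exact mul_pos (S.val_x₀_sub_val_y_pos hv) (by linarith)

lemma Sweep.val_pt_neg {v : V n} (hv : v ∈ L) {s : ℝ} (h : S.t v < s) :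
    val c₀ v (S.pt s) < 0 := by
  rw [S.val_pt_eq hv]
  exact mul_neg_of_pos_of_neg (S.val_x₀_sub_val_y_pos hv) (by linarith)

lemma Sweep.val_pt_t {v : V n} (hv : v ∈ L) : val c₀ v (S.pt (S.t v)) = 0 := by
  rw [S.val_pt_eq hv, sub_self, mul_zero]

def Sweep.Between (a b c : V n) : Prop :=
  S.t a < S.t b ∧ S.t b < S.t c ∨ S.t c < S.t b ∧ S.t b < S.t a

variable {S}

lemma Sweep.Between.symm {a b c : V n} (h : S.Between a b c) : S.Between c b a :=
  Or.symm h

lemma Sweep.between_or_between_or_between {a b c : V n} (ha : a ∈ L) (hb : b ∈ L) (hc : c ∈ L)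
    (hab : a ≠ b) (hbc : b ≠ c) (hac : a ≠ c) :
    S.Between b a c ∨ S.Between a b c ∨ S.Between a c b := by
  have := S.t_ne ha hb hab
  have := S.t_ne hb hc hbc
  have := S.t_ne ha hc hac
  unfold Sweep.Between
  rcases lt_trichotomy (S.t a) (S.t b) with h1 | h1 | h1 <;>
    rcases lt_trichotomy (S.t b) (S.t c) with h2 | h2 | h2 <;>
    rcases lt_trichotomy (S.t a) (S.t c) with h3 | h3 | h3 <;>
    simp_all only [ne_eq, not_true_eq_false] <;> tauto

def Plane (L : Finset (V n)) : Prop :=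
  ∀ a ∈ L, ∀ b ∈ L, ∀ c ∈ L, a ≠ c → b ∈ Submodule.span ℝ ({a, c} : Set (V n))

lemma Sweep.exists_pos_combination (hpl : Plane L) {a b c : V n} (ha : a ∈ L) (hb : b ∈ L)
    (hc : c ∈ L) (h : S.Between a b c) :
    ∃ α γ : ℝ, 0 < α ∧ 0 < γ ∧ ∀ x, val c₀ b x = α * val c₀ a x + γ * val c₀ c x := by
  wlog h' : S.t a < S.t b ∧ S.t b < S.t c generalizing a c
  · obtain ⟨α, γ, hα, hγ, hval⟩ := this hc ha h.symm (h.resolve_left h')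
    exact ⟨γ, α, hγ, hα, fun x => by rw [hval, add_comm]⟩
  obtain ⟨s, r, hsr⟩ :=
    Submodule.mem_span_pair.1 (hpl a ha b hb c hc fun hac => by subst hac; linarith)
  set α := eps c₀ b * s * eps c₀ a
  set γ := eps c₀ b * r * eps c₀ c
  have hval : ∀ x, val c₀ b x = α * val c₀ a x + γ * val c₀ c x := by
    intro x
    have hbx : b ⬝ᵥ x = s * (a ⬝ᵥ x) + r * (c ⬝ᵥ x) := by
      simp [← hsr, add_dotProduct, smul_dotProduct]
    simp only [val, sgn_eq_smul, smul_dotProduct, smul_eq_mul, hbx, α, γ]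
    linear_combination (-(eps c₀ b * s * (a ⬝ᵥ x))) * eps_mul_self c₀ a +
      (-(eps c₀ b * r * (c ⬝ᵥ x))) * eps_mul_self c₀ c
  refine ⟨α, γ, ?_, ?_, hval⟩
  · have := hval (S.pt (S.t c))
    rw [S.val_pt_t hc, mul_zero, add_zero] at this
    nlinarith [S.val_pt_neg hb h'.2, S.val_pt_neg ha (h'.1.trans h'.2)]
  · have := hval (S.pt (S.t a))
    rw [S.val_pt_t ha, mul_zero, zero_add] at this
    nlinarith [S.val_pt_pos hb h'.1, S.val_pt_pos hc (h'.1.trans h'.2)]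

lemma Sweep.val_neg_of_between (hpl : Plane L) {a b c : V n} (ha : a ∈ L) (hb : b ∈ L)
    (hc : c ∈ L) (h : S.Between a b c) {z : V n} (hza : val c₀ a z < 0) (hzc : val c₀ c z < 0) :
    val c₀ b z < 0 := by
  obtain ⟨α, γ, hα, hγ, hval⟩ := S.exists_pos_combination hpl ha hb hc h
  rw [hval z]
  nlinarith

lemma Sweep.val_pos_of_between (hpl : Plane L) {a b c : V n} (ha : a ∈ L) (hb : b ∈ L)
    (hc : c ∈ L) (h : S.Between a b c) {z : V n} (hza : 0 < val c₀ a z) (hzc : 0 < val c₀ c z) :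
    0 < val c₀ b z := by
  obtain ⟨α, γ, hα, hγ, hval⟩ := S.exists_pos_combination hpl ha hb hc h
  rw [hval z]
  nlinarith

/-- Stopping between the first and the second crossing. -/
lemma Sweep.exists_pt_crossed_one (hL : 2 ≤ L.card) :
    ∃ β ∈ L, ∃ s ∈ Set.Ioo (0 : ℝ) 1,
      ∀ v ∈ L, (0 < val c₀ v (S.pt s) ↔ v ≠ β) ∧ val c₀ v (S.pt s) ≠ 0 := by
  obtain ⟨β, hβ, hβmin⟩ := L.exists_min_image S.t (Finset.card_pos.1 (by omega))
  obtain ⟨β₂, hβ₂, hβ₂min⟩ := (L.erase β).exists_min_image S.t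
    (Finset.card_pos.1 (by rw [Finset.card_erase_of_mem hβ]; omega))
  obtain ⟨hβ₂β, hβ₂⟩ := Finset.mem_erase.1 hβ₂
  obtain ⟨s, hβs, hsβ₂⟩ :=
    exists_between ((hβmin β₂ hβ₂).lt_of_ne (S.t_ne hβ hβ₂ hβ₂β.symm))
  refine ⟨β, hβ, s, ⟨(S.t_mem_Ioo hβ).1.trans hβs, hsβ₂.trans (S.t_mem_Ioo hβ₂).2⟩,
    fun v hv => ?_⟩
  by_cases hvβ : v = β
  · subst hvβ
    have := S.val_pt_neg hv hβs
    exact ⟨iff_of_false this.not_gt (not_not.2 rfl), this.ne⟩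
  · have := S.val_pt_pos hv (hsβ₂.trans_le (hβ₂min v (Finset.mem_erase.2 ⟨hvβ, hv⟩)))
    exact ⟨iff_of_true this hvβ, this.ne'⟩

lemma Sweep.Between.ne_left {a b c : V n} (h : S.Between a b c) : a ≠ b := by
  rintro rfl; rcases h with h | h <;> linarith [h.1, h.2]

lemma Sweep.Between.ne_right {a b c : V n} (h : S.Between a b c) : b ≠ c :=
  fun hbc => h.symm.ne_left hbc.symm

lemma Sweep.ne_of_between (hpl : Plane L) (he : IsChamber L e) {a b c : V n}
    (ha : a ∈ L) (hb : b ∈ L) (hc : c ∈ L) (h : S.Between a b c)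
    (hae : c₀ a ≠ e a) (hce : c₀ c ≠ e c) : c₀ b ≠ e b := by
  obtain ⟨z, hz⟩ := he
  rw [ne_comm, ← hz.val_neg_iff ha] at hae
  rw [ne_comm, ← hz.val_neg_iff hc] at hce
  rw [ne_comm, ← hz.val_neg_iff hb]
  exact S.val_neg_of_between hpl ha hb hc h hae hce

lemma Sweep.eq_of_between (hpl : Plane L) (he : IsChamber L e) {a b c : V n}
    (ha : a ∈ L) (hb : b ∈ L) (hc : c ∈ L) (h : S.Between a b c)
    (hae : c₀ a = e a) (hce : c₀ c = e c) : c₀ b = e b := by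
  obtain ⟨z, hz⟩ := he
  rw [eq_comm, ← hz.val_pos_iff ha] at hae
  rw [eq_comm, ← hz.val_pos_iff hc] at hce
  rw [eq_comm, ← hz.val_pos_iff hb]
  exact S.val_pos_of_between hpl ha hb hc h hae hce

end Sweep

lemma exists_sweep (hA : IsArrangement A) (hx₀ : Realizes A c₀ x) (hL : L ⊆ A)
    {U : Set (V n)} (hU : IsOpen U) (hUne : U.Nonempty)
    (hUneg : ∀ y ∈ U, ∀ v ∈ L, val c₀ v y < 0) :
    ∃ S : Sweep c₀ L, S.x₀ = x ∧ S.y ∈ U := by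
  have hpos : ∀ v ∈ L, 0 < val c₀ v x := fun v hv => (hx₀.val_pos_iff (hL hv)).2 rfl
  -- two hyperplanes are crossed at the same time exactly when `y` lies on this hyperplane
  let q : V n × V n → V n := fun p => val c₀ p.1 x • sgn c₀ p.2 - val c₀ p.2 x • sgn c₀ p.1
  have hq : ∀ a ∈ L, ∀ b ∈ L, a ≠ b → q (a, b) ≠ 0 := by
    intro a ha b hb hab h0
    have h : (-(val c₀ b x * eps c₀ a)) • a + (val c₀ a x * eps c₀ b) • b = 0 := by
      simp only [q, sgn_eq_smul, smul_smul, sub_eq_zero] at h0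
      rw [neg_smul, neg_add_eq_zero, h0]
    exact mul_ne_zero (hpos a ha).ne' (eps_ne_zero c₀ b)
      ((LinearIndependent.pair_iff.1 (linearIndependent_pair hA (hL ha) (hL hb) hab) _ _ h).2)
  obtain ⟨y, hyU, hy⟩ := exists_dotProduct_ne_zero (((L ×ˢ L).filter fun p => p.1 ≠ p.2).image q)
    (by
      simp only [Finset.mem_image, Finset.mem_filter, Finset.mem_product]
      rintro _ ⟨⟨a, b⟩, ⟨⟨ha, hb⟩, hab⟩, rfl⟩
      exact hq a ha b hb hab) hU hUne
  have hneg := hUneg y hyU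
  refine ⟨⟨x, y, hpos, hneg, fun a ha b hb hab heq => hy (q (a, b)) ?_ ?_⟩, rfl, hyU⟩
  · exact Finset.mem_image_of_mem q (by simp [ha, hb, hab])
  · have hDa : 0 < val c₀ a x - val c₀ a y := by linarith [hpos a ha, hneg a ha]
    have hDb : 0 < val c₀ b x - val c₀ b y := by linarith [hpos b hb, hneg b hb]
    rw [div_eq_div_iff hDa.ne' hDb.ne'] at heq
    simp only [q, sub_dotProduct, smul_dotProduct, smul_eq_mul]
    change val c₀ a x * val c₀ b y - val c₀ b x * val c₀ a y = 0
    linarith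

lemma exists_adjacent_chamber (hA : IsArrangement A) {μ₁ μ₂ : V n → Bool}
    (h₁ : IsChamber A μ₁) (h₂ : IsChamber A μ₂)
    (hD : 2 ≤ (A.filter fun v => μ₁ v ≠ μ₂ v).card) :
    ∃ β ∈ A.filter (fun v => μ₁ v ≠ μ₂ v), ∃ e, IsChamber A e ∧
      ∀ v ∈ A, (e v = μ₁ v ↔ v ≠ β) := by
  obtain ⟨z₁, hz₁⟩ := h₁
  obtain ⟨z₂, hz₂⟩ := h₂
  set D := A.filter fun v => μ₁ v ≠ μ₂ v
  have hDA : D ⊆ A := Finset.filter_subset _ _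
  have hUneg : ∀ y ∈ {y | Realizes A μ₂ y}, ∀ v ∈ D, val μ₁ v y < 0 := fun y hy v hv =>
    (Realizes.val_neg_iff hy (hDA hv)).2 (Finset.mem_filter.1 hv).2.symm
  obtain ⟨S, rfl, hSy⟩ :=
    exists_sweep hA hz₁ hDA (isOpen_setOf_realizes A μ₂) ⟨z₂, hz₂⟩ hUneg
  obtain ⟨β, hβD, s, hs, hsD⟩ := S.exists_pt_crossed_one hD
  have hval : ∀ v ∈ A, (0 < val μ₁ v (S.pt s) ↔ v ≠ β) ∧ val μ₁ v (S.pt s) ≠ 0 := by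
    intro v hv
    by_cases hvD : v ∈ D
    · exact hsD v hvD
    have hx : 0 < val μ₁ v S.x₀ := (hz₁.val_pos_iff hv).2 rfl
    have hy : 0 < val μ₁ v S.y :=
      (Realizes.val_pos_iff hSy hv).2 (by simpa [D, hv, eq_comm] using hvD)
    have hpos : 0 < val μ₁ v (S.pt s) := by
      rw [S.val_pt]
      nlinarith [hs.1, hs.2]
    exact ⟨iff_of_true hpos (by rintro rfl; exact hvD hβD), hpos.ne'⟩
  have hne : ∀ v ∈ A, v ⬝ᵥ S.pt s ≠ 0 := fun v hv h0 =>
    (hval v hv).2 ((val_eq_zero_iff μ₁ v _).2 h0)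
  exact ⟨β, hβD, signs (S.pt s), isChamber_signs hne, fun v hv => by
    rw [signs_eq_iff (hval v hv).2, (hval v hv).1]⟩

section Localization

variable {u w : V n}

lemma loc_subset (A : Finset (V n)) (u w : V n) : loc A u w ⊆ A :=
  Finset.filter_subset _ _

lemma mem_loc_left (hu : u ∈ A) : u ∈ loc A u w :=
  Finset.mem_filter.2 ⟨hu, fun _ h _ => h⟩

lemma mem_loc_right (hw : w ∈ A) : w ∈ loc A u w :=
  Finset.mem_filter.2 ⟨hw, fun _ _ h => h⟩

lemma mem_loc_iff {v : V n} :
    v ∈ loc A u w ↔ v ∈ A ∧ perpSpan {u, w} ≤ LinearMap.ker (hypl v) := by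
  simp only [loc, Finset.mem_filter, SetLike.le_def, mem_perpSpan, Finset.mem_insert,
    Finset.mem_singleton, forall_eq_or_imp, forall_eq, LinearMap.mem_ker, hypl_apply]
  exact and_congr_right fun _ => ⟨fun h x hx => h x hx.1 hx.2, fun h x hu hw => h ⟨hu, hw⟩⟩

lemma loc_plane (hA : IsArrangement A) (hcd : Codim2 A u w) : Plane (loc A u w) := by
  obtain ⟨hu, hw, hind⟩ := hcd
  have hspan : ∀ v ∈ loc A u w, v ∈ Submodule.span ℝ ({u, w} : Set (V n)) := fun v hv => by
    simpa using mem_span_of_perpSpan_le (mem_loc_iff.1 hv).2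
  intro a ha b hb c hc hac
  have hle : Submodule.span ℝ ({a, c} : Set (V n)) ≤ Submodule.span ℝ {u, w} := by
    rw [Submodule.span_le, Set.insert_subset_iff, Set.singleton_subset_iff]
    exact ⟨hspan a ha, hspan c hc⟩
  rw [Submodule.eq_of_le_of_finrank_le hle (by rw [finrank_span_pair hind,
    finrank_span_pair (linearIndependent_pair hA (loc_subset A u w ha) (loc_subset A u w hc) hac)])]
  exact hspan b hb

lemma nonempty_sweep_loc (hA : IsArrangement A) (hc₀ : IsChamber A c₀) (u w : V n) :
    Nonempty (Sweep c₀ (loc A u w)) := by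
  obtain ⟨x₀, hx₀⟩ := hc₀
  have hL := loc_subset A u w
  have hU : IsOpen {y : V n | ∀ v ∈ loc A u w, val c₀ v y < 0} := by
    simp only [Set.ofPred_forall]
    exact isOpen_biInter_finset fun v _ => isOpen_lt (continuous_val c₀ v) continuous_const
  obtain ⟨S, -⟩ := exists_sweep hA hx₀ hL hU ⟨-x₀, fun v hv => by
    rw [val_neg, neg_lt_zero]; exact (hx₀.val_pos_iff (hL hv)).2 rfl⟩ fun y hy => hy
  exact ⟨S⟩

lemma is2Closed_sepSet (he : IsChamber A e) : Is2Closed A c₀ (SepSet A c₀ e) := by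
  intro u w _ H hH
  obtain ⟨z, hz⟩ := he
  have hL := loc_subset A u w
  have key : ∀ v ∈ loc A u w, v ∈ SepSet (loc A u w) c₀ (fun v => !e v) ↔
      v ∉ SepSet A c₀ e ∩ loc A u w := by
    intro v hv
    simp only [SepSet, Finset.mem_filter, Finset.mem_inter, hv, hL hv, true_and, and_true]
    cases c₀ v <;> cases e v <;> simp
  obtain ⟨hHL, hHJ⟩ := Finset.mem_sdiff.1 hH
  refine ⟨_, ⟨-z, (hz.mono_s18 hL).neg⟩, (key H hHL).2 hHJ, fun v hv => ?_⟩
  have hvL := Finset.filter_subset _ _ hv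
  exact Finset.mem_sdiff.2 ⟨hvL, (key v hvL).1 hv⟩

lemma _root_.Is2Closed.mem_of_between (hA : IsArrangement A) {J : Finset (V n)}
    (hJ : Is2Closed A c₀ J) (hcd : Codim2 A u w) (S : Sweep c₀ (loc A u w)) {a b c : V n}
    (ha : a ∈ loc A u w) (hb : b ∈ loc A u w) (hc : c ∈ loc A u w) (hbtw : S.Between a b c)
    (haJ : a ∈ J) (hcJ : c ∈ J) : b ∈ J := by
  by_contra hbJ
  obtain ⟨e, ⟨z, hz⟩, hbe, hesub⟩ := hJ u w hcd b (by simp [hb, hbJ])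
  have hpos : ∀ v ∈ loc A u w, v ∈ J → 0 < val c₀ v z := fun v hv hvJ => by
    have hve : v ∉ SepSet (loc A u w) c₀ e := fun hve =>
      (Finset.mem_sdiff.1 (hesub hve)).2 (Finset.mem_inter.2 ⟨hvJ, hv⟩)
    rw [hz.mem_sepSet_iff hv, not_lt] at hve
    exact hve.lt_of_ne' (hz.val_ne_zero hv)
  exact ((hz.mem_sepSet_iff hb).1 hbe).not_gt
    (S.val_pos_of_between (loc_plane hA hcd) ha hb hc hbtw (hpos a ha haJ) (hpos c hc hcJ))

end Localization

section Modularity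

/-- The localization `A_X`. -/
noncomputable def localization (A : Finset (V n)) (X : Submodule ℝ (V n)) : Finset (V n) :=
  A.filter fun v => X ≤ LinearMap.ker (hypl v)

variable {X Z : Submodule ℝ (V n)} {v : V n}

@[simp] lemma mem_localization : v ∈ localization A X ↔ v ∈ A ∧ X ≤ LinearMap.ker (hypl v) :=
  Finset.mem_filter

lemma localization_subset (A : Finset (V n)) (X : Submodule ℝ (V n)) : localization A X ⊆ A :=
  Finset.filter_subset _ _

lemma _root_.IsArrangement.localization (hA : IsArrangement A) (X : Submodule ℝ (V n)) :
    IsArrangement (localization A X) :=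
  ⟨fun v hv => hA.1 v (localization_subset A X hv),
    fun u hu w hw => hA.2 u (localization_subset A X hu) w (localization_subset A X hw)⟩

lemma eq_perpSpan_localization (hX : X ∈ InterLattice A) : X = perpSpan (localization A X) := by
  obtain ⟨S, hSA, rfl⟩ := hX
  refine le_antisymm (fun x hx => mem_perpSpan.2 fun v hv => ?_) (perpSpan_antitone
    fun v hv => mem_localization.2 ⟨hSA hv, perpSpan_le_ker hv⟩)
  simpa using (mem_localization.1 hv).2 hx

lemma finrank_add_rankA_localization (hX : X ∈ InterLattice A) :
    Module.finrank ℝ X + rankA (localization A X) = n := by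
  have h := finrank_perpSpan_add_rankA (localization A X)
  rwa [← eq_perpSpan_localization hX] at h

lemma interLattice_mono (h : B ⊆ A) : InterLattice B ⊆ InterLattice A :=
  fun _ ⟨S, hS, hZ⟩ => ⟨S, hS.trans h, hZ⟩

lemma mem_interLattice_localization (hZ : Z ∈ InterLattice A) (hXZ : X ≤ Z) :
    Z ∈ InterLattice (localization A X) :=
  ⟨localization A Z, fun v hv => by
    simp_all [hXZ.trans (mem_localization.1 hv).2], eq_perpSpan_localization hZ⟩

lemma _root_.IsModular.localization (hZ : IsModular A Z) (hXZ : X ≤ Z) :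
    IsModular (localization A X) Z :=
  ⟨mem_interLattice_localization hZ.1 hXZ, fun Y hY => mem_interLattice_localization
    (hZ.2 Y (interLattice_mono (localization_subset A X) hY)) (hXZ.trans le_sup_left)⟩

lemma _root_.IncidentSub.mono_s18 (h : IncidentSub A c₀ Z) (hBA : B ⊆ A) : IncidentSub B c₀ Z :=
  h.imp fun _ ⟨hxZ, hx⟩ => ⟨hxZ, fun v hv => hx v (hBA hv)⟩

lemma _root_.IsModularFlag.exists_localization {X : Fin (rankA A + 1) → Submodule ℝ (V n)}
    (hX : IsModularFlag A X) (hinc : ∀ i, IncidentSub A c₀ (X i)) (i : Fin (rankA A + 1)) :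
    ∃ X' : Fin (rankA (localization A (X i)) + 1) → Submodule ℝ (V n),
      IsModularFlag (localization A (X i)) X' ∧
        ∀ j, IncidentSub (localization A (X i)) c₀ (X' j) := by
  obtain ⟨h0, hmod, hanti, hdim⟩ := hX
  have hrank : rankA (localization A (X i)) = i := by
    have := finrank_add_rankA_localization (hmod i).1
    have := rankA_le A
    have := hdim i
    omega
  let ι : Fin (rankA (localization A (X i)) + 1) → Fin (rankA A + 1) :=
    fun j => ⟨j, by omega⟩
  have hι : ∀ j, X i ≤ X (ι j) := fun j => hanti _ _ (by rw [Fin.le_def]; simp only [ι]; omega)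
  refine ⟨X ∘ ι, ⟨h0, fun j => (hmod _).localization (hι j),
    fun j k hjk => hanti _ _ hjk, fun j => hdim _⟩,
    fun j => (hinc _).mono_s18 (localization_subset A _)⟩

/-- Stanley's characterization of the modular coatoms `X` of the intersection lattice. -/
def IsModularCoatom (A : Finset (V n)) (X : Submodule ℝ (V n)) : Prop :=
  ∀ u ∈ A, ∀ w ∈ A, u ≠ w → ∃ v ∈ loc A u w, X ≤ LinearMap.ker (hypl v)

/-- By modularity `X ⊔ (ker u ⊓ ker w)` is a flat, and it is proper by a dimension count:
`X ⊓ (ker u ⊓ ker w)` contains the centre `perpSpan A`. -/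
lemma _root_.IsModular.isModularCoatom (hA : IsArrangement A) (hX : IsModular A X)
    (hdim : Module.finrank ℝ X + rankA A = n + 1) : IsModularCoatom A X := by
  intro u hu w hw huw
  set Y := perpSpan {u, w}
  have hY : Y ∈ InterLattice A := ⟨{u, w}, by simp [Finset.insert_subset_iff, hu, hw], rfl⟩
  obtain ⟨S, hSA, hXY⟩ := hX.2 Y hY
  have hcentre : perpSpan A ≤ X ⊓ Y := by
    obtain ⟨T, hTA, rfl⟩ := hX.1
    exact le_inf (perpSpan_antitone hTA)
      (perpSpan_antitone (by simp [Finset.insert_subset_iff, hu, hw]))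
  have hsup : Module.finrank ℝ ↥(X ⊔ Y) < n := by
    have := Submodule.finrank_sup_add_finrank_inf_eq X Y
    have := Submodule.finrank_mono hcentre
    have : Module.finrank ℝ Y + 2 = n := finrank_perpSpan_pair (linearIndependent_pair hA hu hw huw)
    have := finrank_perpSpan_add_rankA A
    omega
  obtain ⟨v, hv⟩ : S.Nonempty := by
    rw [Finset.nonempty_iff_ne_empty]
    rintro rfl
    rw [hXY, Finset.inf_empty, finrank_top, Module.finrank_fin_fun] at hsup
    exact lt_irrefl _ hsup
  have hle : X ⊔ Y ≤ LinearMap.ker (hypl v) := hXY ▸ perpSpan_le_ker hv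
  exact ⟨v, mem_loc_iff.2 ⟨hSA hv, le_sup_right.trans hle⟩, le_sup_left.trans hle⟩

lemma _root_.IncidentSub.exists_val_pos (h : IncidentSub A c₀ X) :
    ∃ xs ∈ X, ∀ v ∈ A \ localization A X, 0 < val c₀ v xs := by
  obtain ⟨xs, hxs, hpos⟩ := h
  refine ⟨xs, hxs, fun v hv => ?_⟩
  obtain ⟨hvA, hvX⟩ := Finset.mem_sdiff.1 hv
  have := hpos v hvA fun hle => hvX (mem_localization.2 ⟨hvA, hle⟩)
  rw [val_eq]
  split_ifs at this ⊢ <;> linarith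

/-- Otherwise `b₁` would lie in the plane spanned by `a` and `v`, which both vanish on `X`. -/
lemma eq_of_mem_loc_of_mem_localization (hA : IsArrangement A) {b₁ b₂ : V n}
    (hcd : Codim2 A b₁ b₂) (hb₁X : b₁ ∉ localization A X) {a v : V n} (ha : a ∈ loc A b₁ b₂)
    (hv : v ∈ loc A b₁ b₂) (haX : a ∈ localization A X) (hvX : v ∈ localization A X) :
    a = v := by
  by_contra hav
  obtain ⟨s, r, hsr⟩ := Submodule.mem_span_pair.1
    (loc_plane hA hcd a ha b₁ (mem_loc_left hcd.1) v hv hav)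
  refine hb₁X (mem_localization.2 ⟨hcd.1, fun x hx => ?_⟩)
  have ha0 : a ⬝ᵥ x = 0 := by simpa using (mem_localization.1 haX).2 hx
  have hv0 : v ⬝ᵥ x = 0 := by simpa using (mem_localization.1 hvX).2 hx
  simp [← hsr, add_dotProduct, smul_dotProduct, ha0, hv0]

/-- The hyperplane `v` of `A_X` is the only one of the localization separating `c₀` from
`-xs + δ v`, where `xs ∈ X` comes from the incidence of `c₀` and `δ > 0` is small. -/
lemma exists_mem_localization_not_between (hA : IsArrangement A) (hX : IsModularCoatom A X)
    (hinc : IncidentSub A c₀ X) {b₁ b₂ : V n} (hb₁ : b₁ ∈ A \ localization A X)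
    (hb₂ : b₂ ∈ A \ localization A X) (hb : b₁ ≠ b₂) (S : Sweep c₀ (loc A b₁ b₂)) :
    ∃ v ∈ loc A b₁ b₂, v ∈ localization A X ∧
      ∀ a ∈ loc A b₁ b₂, ∀ c ∈ loc A b₁ b₂, ¬ S.Between a v c := by
  obtain ⟨hb₁A, hb₁X⟩ := Finset.mem_sdiff.1 hb₁
  obtain ⟨v, hv, hvX⟩ := hX b₁ hb₁A b₂ (Finset.mem_sdiff.1 hb₂).1 hb
  have hvA := loc_subset A b₁ b₂ hv
  have hcd : Codim2 A b₁ b₂ := ⟨hb₁A, (Finset.mem_sdiff.1 hb₂).1,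
    linearIndependent_pair hA hb₁A (Finset.mem_sdiff.1 hb₂).1 hb⟩
  have hout : ∀ a ∈ (loc A b₁ b₂).erase v, a ∈ A \ localization A X := fun a ha =>
    Finset.mem_sdiff.2 ⟨loc_subset A b₁ b₂ (Finset.mem_of_mem_erase ha), fun haX =>
      Finset.ne_of_mem_erase ha (eq_of_mem_loc_of_mem_localization hA hcd hb₁X
        (Finset.mem_of_mem_erase ha) hv haX (mem_localization.2 ⟨hvA, hvX⟩))⟩
  obtain ⟨xs, hxsX, hxs⟩ := hinc.exists_val_pos
  obtain ⟨δ, hδ, hδsmall⟩ := exists_pos_forall_mul_lt ((loc A b₁ b₂).erase v)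
    (fun a => val c₀ a xs) (fun a => sgn c₀ a ⬝ᵥ sgn c₀ v) fun a ha => hxs a (hout a ha)
  set z := -xs + δ • sgn c₀ v
  have hval : ∀ a, val c₀ a z = -val c₀ a xs + δ * (sgn c₀ a ⬝ᵥ sgn c₀ v) := fun a => by
    simp [z, val, dotProduct_add, dotProduct_smul]
  have hneg : ∀ a ∈ loc A b₁ b₂, a ≠ v → val c₀ a z < 0 := fun a ha hav => by
    rw [hval]; linarith [hδsmall a (Finset.mem_erase.2 ⟨hav, ha⟩)]
  have hvz : 0 < val c₀ v z := by
    have hv0 : val c₀ v xs = 0 := (val_eq_zero_iff c₀ v xs).2 (by simpa using hvX hxsX)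
    rw [hval, hv0, sgn_dotProduct_self]
    have : 0 < v ⬝ᵥ v := by simpa using dotProduct_self_star_pos_iff.2 (hA.1 v hvA)
    positivity
  refine ⟨v, hv, mem_localization.2 ⟨hvA, hvX⟩, fun a ha c hc hbtw => hvz.not_gt ?_⟩
  exact S.val_neg_of_between (loc_plane hA hcd) ha hv hc hbtw (hneg a ha hbtw.ne_left)
    (hneg c hc hbtw.ne_right.symm)

end Modularity

section Fibers

variable {X : Submodule ℝ (V n)}

lemma sepSet_subset_or_subset (hA : IsArrangement A) (hc₀ : IsChamber A c₀)
    (hX : IsModularCoatom A X) (hinc : IncidentSub A c₀ X) {μ₁ μ₂ : V n → Bool}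
    (h₁ : IsChamber A μ₁) (h₂ : IsChamber A μ₂) (h : ∀ v ∈ localization A X, μ₁ v = μ₂ v) :
    SepSet A c₀ μ₁ ⊆ SepSet A c₀ μ₂ ∨ SepSet A c₀ μ₂ ⊆ SepSet A c₀ μ₁ := by
  by_contra! hne
  obtain ⟨b₁, hb₁, hb₁'⟩ := Finset.not_subset.1 hne.1
  obtain ⟨b₂, hb₂, hb₂'⟩ := Finset.not_subset.1 hne.2
  rw [mem_sepSet] at hb₁ hb₁' hb₂ hb₂'
  simp only [hb₁.1, hb₂.1, true_and, not_not] at hb₁' hb₂'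
  have hout : ∀ {b : V n} {μ μ' : V n → Bool}, b ∈ A → c₀ b ≠ μ b → c₀ b = μ' b →
      (∀ v ∈ localization A X, μ v = μ' v) → b ∈ A \ localization A X := fun hbA hμ hμ' hμμ' =>
    Finset.mem_sdiff.2 ⟨hbA, fun hbX => hμ (hμ'.trans (hμμ' _ hbX).symm)⟩
  have hB₁ := hout hb₁.1 hb₁.2 hb₁' h
  have hB₂ := hout hb₂.1 hb₂.2 hb₂' fun v hv => (h v hv).symm
  have hb₁₂ : b₁ ≠ b₂ := by rintro rfl; exact hb₁.2 hb₂'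
  have hcd : Codim2 A b₁ b₂ := ⟨hb₁.1, hb₂.1, linearIndependent_pair hA hb₁.1 hb₂.1 hb₁₂⟩
  obtain ⟨S⟩ := nonempty_sweep_loc hA hc₀ b₁ b₂
  obtain ⟨v, hv, hvX, hvend⟩ := exists_mem_localization_not_between hA hX hinc hB₁ hB₂ hb₁₂ S
  have hpl := loc_plane hA hcd
  have hL := loc_subset A b₁ b₂
  -- if `b` separates only `μ` and `b'` only `μ'` from `c₀`, then `b` is not crossed between
  -- `v` and `b'`: it would lie on the same side as `v` and `b'` for one of `μ`, `μ'`
  have key : ∀ {μ μ' : V n → Bool} {b b' : V n}, IsChamber A μ → IsChamber A μ' →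
      b ∈ loc A b₁ b₂ → b' ∈ loc A b₁ b₂ → μ v = μ' v → S.Between v b b' →
      c₀ b ≠ μ b → c₀ b = μ' b → c₀ b' ≠ μ' b' → c₀ b' = μ b' → False := by
    intro μ μ' b b' hμ hμ' hb hb' hvμ hbtw hbμ hbμ' hb'μ' hb'μ
    by_cases hv' : c₀ v = μ' v
    · exact hbμ (S.eq_of_between hpl (hμ.mono_s18 hL) hv hb hb' hbtw (hv'.trans hvμ.symm) hb'μ)
    · exact S.ne_of_between hpl (hμ'.mono_s18 hL) hv hb hb' hbtw hv' hb'μ' hbμ'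
  have hvb : ∀ {b}, b ∈ A \ localization A X → v ≠ b := fun hb hvb =>
    (Finset.mem_sdiff.1 hb).2 (hvb ▸ hvX)
  rcases S.between_or_between_or_between hv (mem_loc_left hb₁.1) (mem_loc_right hb₂.1)
    (hvb hB₁) hb₁₂ (hvb hB₂) with hbtw | hbtw | hbtw
  · exact hvend _ (mem_loc_left hb₁.1) _ (mem_loc_right hb₂.1) hbtw
  · exact key h₁ h₂ (mem_loc_left hb₁.1) (mem_loc_right hb₂.1) (h v hvX) hbtw hb₁.2 hb₁'
      hb₂.2 hb₂'
  · exact key h₂ h₁ (mem_loc_right hb₂.1) (mem_loc_left hb₁.1) (h v hvX).symm hbtw hb₂.2 hb₂'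
      hb₁.2 hb₁'

lemma mem_of_sepSet_sdiff_localization (hA : IsArrangement A) (hc₀ : IsChamber A c₀)
    (hX : IsModularCoatom A X) (hinc : IncidentSub A c₀ X) {J : Finset (V n)}
    (hJ : Is2Closed A c₀ J) {m' g μ : V n → Bool} (hg : IsChamber A g) (hμ : IsChamber A μ)
    (hm'J : SepSet A c₀ m' ∩ localization A X ⊆ J) (hgJ : SepSet A c₀ g ⊆ J)
    (hgm' : SepSet A c₀ g ∩ localization A X ⊆ SepSet A c₀ m' ∩ localization A X)
    (hμm' : ∀ v ∈ localization A X, μ v = m' v) {h b : V n}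
    (hh : h ∈ SepSet A c₀ μ \ localization A X) (hb : b ∈ SepSet A c₀ g \ localization A X)
    (hbμ : b ∉ SepSet A c₀ μ) : h ∈ J := by
  obtain ⟨hhS, hhX⟩ := Finset.mem_sdiff.1 hh
  obtain ⟨hbS, hbX⟩ := Finset.mem_sdiff.1 hb
  rw [mem_sepSet] at hhS hbS hbμ
  simp only [hbS.1, true_and, not_not] at hbμ
  have hhb : h ≠ b := by rintro rfl; exact hhS.2 hbμ
  have hcd : Codim2 A h b := ⟨hhS.1, hbS.1, linearIndependent_pair hA hhS.1 hbS.1 hhb⟩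
  obtain ⟨S⟩ := nonempty_sweep_loc hA hc₀ h b
  obtain ⟨v, hv, hvX, hvend⟩ := exists_mem_localization_not_between hA hX hinc
    (Finset.mem_sdiff.2 ⟨hhS.1, hhX⟩) (Finset.mem_sdiff.2 ⟨hbS.1, hbX⟩) hhb S
  have hpl := loc_plane hA hcd
  have hL := loc_subset A h b
  have hhL := mem_loc_left (w := b) hhS.1
  have hbL := mem_loc_right (u := h) hbS.1
  have hvh : v ≠ h := by rintro rfl; exact hhX hvX
  have hvb : v ≠ b := by rintro rfl; exact hbX hvX
  -- `v` is not crossed between `h` and `b`, so `h` lies between `v` and `b` or `b` between `v`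
  -- and `h`; in both cases convexity of the separation sets decides
  rcases S.between_or_between_or_between hv hhL hbL hvh hhb hvb with hbtw | hbtw | hbtw
  · exact (hvend _ hhL _ hbL hbtw).elim
  · by_cases hvm' : c₀ v = m' v
    · exact absurd (S.eq_of_between hpl (hμ.mono_s18 hL) hv hhL hbL hbtw
        (hvm'.trans (hμm' v hvX).symm) hbμ) hhS.2
    · exact hJ.mem_of_between hA hcd S hv hhL hbL hbtw
        (hm'J (Finset.mem_inter.2 ⟨mem_sepSet.2 ⟨hL hv, hvm'⟩, hvX⟩)) (hgJ (mem_sepSet.2 hbS))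
  · have hvμ : c₀ v = μ v := by
      by_contra hvμ
      exact S.ne_of_between hpl (hμ.mono_s18 hL) hv hbL hhL hbtw hvμ hhS.2 hbμ
    have hvg : c₀ v = g v := by
      by_contra hvg
      have := hgm' (Finset.mem_inter.2 ⟨mem_sepSet.2 ⟨hL hv, hvg⟩, hvX⟩)
      exact (mem_sepSet.1 (Finset.mem_inter.1 this).1).2 (hvμ.trans (hμm' v hvX))
    by_contra hhJ
    have hhg : c₀ h = g h := by
      by_contra hhg
      exact hhJ (hgJ (mem_sepSet.2 ⟨hhS.1, hhg⟩))
    exact hbS.2 (S.eq_of_between hpl (hg.mono_s18 hL) hv hbL hhL hbtw hvg hhg)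

/-- Move from a point of `m'` far along `±xs`, where `xs ∈ X` comes from the incidence of `c₀`. -/
lemma exists_chamber_over (hinc : IncidentSub A c₀ X) {m' : V n → Bool}
    (hm' : IsChamber (localization A X) m') (σ : Bool) :
    ∃ μ, IsChamber A μ ∧ (∀ v ∈ localization A X, μ v = m' v) ∧
      ∀ v ∈ A \ localization A X, (v ∈ SepSet A c₀ μ ↔ σ) := by
  obtain ⟨x', hx'⟩ := hm'
  obtain ⟨xs, hxsX, hxs⟩ := hinc.exists_val_pos
  set r : ℝ := if σ then -1 else 1
  have hr : r * r = 1 := by simp only [r]; split_ifs <;> norm_num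
  obtain ⟨M, hM⟩ := exists_forall_pos_add_mul (A \ localization A X)
    (fun v => r * val c₀ v x') (fun v => val c₀ v xs) hxs
  set z := x' + (r * M) • xs
  have hzX : ∀ v ∈ localization A X, v ⬝ᵥ z = v ⬝ᵥ x' := fun v hv => by
    have : v ⬝ᵥ xs = 0 := by simpa using (mem_localization.1 hv).2 hxsX
    simp [z, dotProduct_add, dotProduct_smul, this]
  have hzB : ∀ v ∈ A \ localization A X, 0 < r * val c₀ v z := fun v hv => by
    have := hM v hv
    rw [val_add, val_smul]
    linear_combination this - M * val c₀ v xs * hr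
  have hne : ∀ v ∈ A, v ⬝ᵥ z ≠ 0 := by
    intro v hv
    by_cases hvX : v ∈ localization A X
    · rw [hzX v hvX]
      exact fun h0 => hx'.val_ne_zero hvX ((val_eq_zero_iff c₀ v x').2 h0)
    · exact fun h0 => right_ne_zero_of_mul (hzB v (Finset.mem_sdiff.2 ⟨hv, hvX⟩)).ne'
        ((val_eq_zero_iff c₀ v z).2 h0)
  refine ⟨signs z, isChamber_signs hne, fun v hv => ?_, fun v hv => ?_⟩
  · change decide (0 < v ⬝ᵥ z) = m' v
    rw [hzX v hv]
    exact hx'.signs_eq hv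
  · rw [(realizes_signs hne).mem_sepSet_iff (Finset.mem_sdiff.1 hv).1]
    have := hzB v hv
    cases σ
    · simpa [r] using this.le
    · simpa [r] using this

variable {m' : V n → Bool}

noncomputable def fiber (A : Finset (V n)) (c₀ : V n → Bool) (X : Submodule ℝ (V n))
    (m' : V n → Bool) : Finset (Finset (V n)) :=
  A.powerset.filter fun T =>
    ∃ μ, IsChamber A μ ∧ (∀ v ∈ localization A X, μ v = m' v) ∧ SepSet A c₀ μ = T

lemma mem_fiber {T : Finset (V n)} : T ∈ fiber A c₀ X m' ↔
    ∃ μ, IsChamber A μ ∧ (∀ v ∈ localization A X, μ v = m' v) ∧ SepSet A c₀ μ = T := by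
  refine Finset.mem_filter.trans (and_iff_right_of_imp ?_)
  rintro ⟨μ, -, -, rfl⟩
  exact Finset.mem_powerset.2 (Finset.filter_subset _ _)

lemma isChain_fiber (hA : IsArrangement A) (hc₀ : IsChamber A c₀) (hX : IsModularCoatom A X)
    (hinc : IncidentSub A c₀ X) : IsChain (· ⊆ ·) (fiber A c₀ X m' : Set (Finset (V n))) := by
  rintro _ h₁ _ h₂ -
  obtain ⟨μ₁, hμ₁, hμ₁m', rfl⟩ := mem_fiber.1 h₁
  obtain ⟨μ₂, hμ₂, hμ₂m', rfl⟩ := mem_fiber.1 h₂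
  exact sepSet_subset_or_subset hA hc₀ hX hinc hμ₁ hμ₂ fun v hv => (hμ₁m' v hv).trans
    (hμ₂m' v hv).symm

lemma filter_ne_eq_sdiff {μ₁ μ₂ : V n → Bool} (h : SepSet A c₀ μ₁ ⊆ SepSet A c₀ μ₂) :
    A.filter (fun v => μ₁ v ≠ μ₂ v) = SepSet A c₀ μ₂ \ SepSet A c₀ μ₁ := by
  ext v
  simp only [Finset.mem_filter, Finset.mem_sdiff, mem_sepSet]
  by_cases hvA : v ∈ A
  · have hv : c₀ v ≠ μ₁ v → c₀ v ≠ μ₂ v := fun h₁ => (mem_sepSet.1 (h (mem_sepSet.2 ⟨hvA, h₁⟩))).2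
    simp only [hvA, true_and]
    revert hv
    cases c₀ v <;> cases μ₁ v <;> cases μ₂ v <;> simp
  · simp [hvA]

/-- Otherwise a chamber adjacent to that of `P`, toward that of `R`, would give a member of the
fiber strictly between `P` and `R`. -/
lemma subset_insert_of_mem_fiber (hA : IsArrangement A) {P R : Finset (V n)}
    (hP : P ∈ fiber A c₀ X m') (hR : R ∈ fiber A c₀ X m') (hPR : P ⊆ R) {h : V n}
    (hhR : h ∈ R) (hhP : h ∉ P) (hRleast : ∀ T ∈ fiber A c₀ X m', h ∈ T → R ⊆ T)
    (hPgreatest : ∀ T ∈ fiber A c₀ X m', h ∉ T → T ⊆ P) : R ⊆ insert h P := by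
  obtain ⟨μP, hμP, hμPm', rfl⟩ := mem_fiber.1 hP
  obtain ⟨μR, hμR, hμRm', rfl⟩ := mem_fiber.1 hR
  intro g hgR
  by_contra hgP
  obtain ⟨hgh, hgP⟩ : g ≠ h ∧ g ∉ SepSet A c₀ μP := by simpa using hgP
  have hD := filter_ne_eq_sdiff hPR
  have hcard : 2 ≤ (A.filter fun v => μP v ≠ μR v).card := by
    rw [hD, ← Finset.card_pair hgh]
    exact Finset.card_le_card (by simp [Finset.insert_subset_iff, *])
  obtain ⟨β, hβ, e, he, heμP⟩ := exists_adjacent_chamber hA hμP hμR hcard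
  rw [hD, Finset.mem_sdiff] at hβ
  have hβA := (mem_sepSet.1 hβ.1).1
  have hβX : β ∉ localization A X := fun hβX => (mem_sepSet.1 hβ.1).2
    (by rw [hμRm' β hβX, ← hμPm' β hβX]; simpa [mem_sepSet, hβA] using hβ.2)
  have hSep : SepSet A c₀ e = insert β (SepSet A c₀ μP) := by
    ext v
    by_cases hvβ : v = β
    · subst hvβ
      have := (heμP v hβA).not.2 (not_not.2 rfl)
      simp only [mem_sepSet, hβA, true_and, Finset.mem_insert, true_or, iff_true]
      simp only [mem_sepSet, hβA, true_and, not_not] at hβ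
      rw [hβ.2]; exact Ne.symm this
    · simp only [mem_sepSet, Finset.mem_insert, hvβ, false_or]
      exact and_congr_right fun hvA => by rw [(heμP v hvA).2 hvβ]
  have heF : insert β (SepSet A c₀ μP) ∈ fiber A c₀ X m' := mem_fiber.2 ⟨e, he, fun v hv => by
    rw [(heμP v (localization_subset A X hv)).2 (by rintro rfl; exact hβX hv), hμPm' v hv],
    hSep⟩
  by_cases hβh : β = h
  · subst hβh
    simpa [hgh, hgP] using hRleast _ heF (Finset.mem_insert_self _ _) hgR
  · exact hβ.2 (hPgreatest _ heF (by simp [Ne.symm hβh, hhP]) (Finset.mem_insert_self _ _))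

end Fibers

section Join

variable {X : Submodule ℝ (V n)} {J : Finset (V n)}

lemma loc_localization {u w : V n} (hu : u ∈ localization A X) (hw : w ∈ localization A X) :
    loc (localization A X) u w = loc A u w := by
  ext v
  simp only [mem_loc_iff, mem_localization]
  refine ⟨fun ⟨⟨hvA, _⟩, h⟩ => ⟨hvA, h⟩, fun ⟨hvA, h⟩ => ⟨⟨hvA, le_trans (fun x hx => ?_) h⟩, h⟩⟩
  rw [mem_perpSpan]
  simp only [Finset.mem_insert, Finset.mem_singleton, forall_eq_or_imp, forall_eq]
  exact ⟨by simpa using (mem_localization.1 hu).2 hx, by simpa using (mem_localization.1 hw).2 hx⟩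

lemma _root_.Is2Closed.localization (hJ : Is2Closed A c₀ J) (X : Submodule ℝ (V n)) :
    Is2Closed (localization A X) c₀ (J ∩ localization A X) := by
  intro u w ⟨hu, hw, hind⟩
  rw [Finset.inter_assoc, Finset.inter_eq_right.2 (loc_subset _ u w), loc_localization hu hw]
  exact hJ u w ⟨localization_subset A X hu, localization_subset A X hw, hind⟩

lemma sepSet_inter_localization_subset_of_mem_fiber {m' : V n → Bool} {T : Finset (V n)}
    (hT : T ∈ fiber A c₀ X m') : SepSet A c₀ m' ∩ localization A X ⊆ T := by
  obtain ⟨μ, -, hμm', rfl⟩ := mem_fiber.1 hT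
  intro v hv
  obtain ⟨hvS, hvX⟩ := Finset.mem_inter.1 hv
  exact mem_sepSet.2 ⟨(mem_sepSet.1 hvS).1, hμm' v hvX ▸ (mem_sepSet.1 hvS).2⟩

/-- `Q` is the least member of the fiber containing `U = S(c₀, c) ∪ S(c₀, d)`. The members
`P ⊂ R ⊆ P ∪ {h}` of the fiber on either side of `h ∉ U` both miss some `b ∈ U`, since
`Q ⊄ P`; in the localization at `h` and `b` this forces `h` into every 2-closed set
containing `U`. -/
lemma mem_of_mem_least_fiber (hA : IsArrangement A) (hc₀ : IsChamber A c₀)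
    (hX : IsModularCoatom A X) (hinc : IncidentSub A c₀ X) {c d m' : V n → Bool}
    (hc : IsChamber A c) (hd : IsChamber A d) (hm' : IsChamber (localization A X) m')
    (hm'U : (SepSet A c₀ c ∪ SepSet A c₀ d) ∩ localization A X ⊆
      SepSet A c₀ m' ∩ localization A X)
    (hJ : Is2Closed A c₀ J) (hUJ : SepSet A c₀ c ∪ SepSet A c₀ d ⊆ J)
    (hm'J : SepSet A c₀ m' ∩ localization A X ⊆ J) {Q : Finset (V n)}
    (hQF : Q ∈ fiber A c₀ X m')
    (hQleast : ∀ T ∈ fiber A c₀ X m', SepSet A c₀ c ∪ SepSet A c₀ d ⊆ T → Q ⊆ T)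
    {h : V n} (hh : h ∈ Q) (hhX : h ∉ localization A X) : h ∈ J := by
  set U := SepSet A c₀ c ∪ SepSet A c₀ d
  have hF := isChain_fiber hA hc₀ hX hinc (m' := m')
  by_cases hhU : h ∈ U
  · exact hUJ hhU
  have hhA : h ∈ A := Finset.mem_powerset.1 (Finset.mem_filter.1 hQF).1 hh
  obtain ⟨R, hRF, hhR, hRleast⟩ := exists_least_of_isChain hF (p := (h ∈ ·)) ⟨_, hQF, hh⟩
  obtain ⟨μ₀, hμ₀, hμ₀m', hμ₀B⟩ := exists_chamber_over hinc hm' false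
  obtain ⟨P, hPF, hhP, hPgreatest⟩ := exists_greatest_of_isChain hF (p := (h ∉ ·))
    ⟨_, mem_fiber.2 ⟨μ₀, hμ₀, hμ₀m', rfl⟩, fun h' =>
      Bool.false_ne_true ((hμ₀B h (Finset.mem_sdiff.2 ⟨hhA, hhX⟩)).1 h')⟩
  have hPR : P ⊆ R := (hF.total hPF hRF).resolve_right fun hRP => hhP (hRP hhR)
  have hRP := subset_insert_of_mem_fiber hA hPF hRF hPR hhR hhP hRleast hPgreatest
  obtain ⟨b, hbU, hbP⟩ : ∃ b ∈ U, b ∉ P := by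
    by_contra! hUP
    exact hhP (hQleast P hPF hUP hh)
  have hbX : b ∉ localization A X := fun hbX =>
    hbP (sepSet_inter_localization_subset_of_mem_fiber hPF (hm'U (Finset.mem_inter.2 ⟨hbU, hbX⟩)))
  have hbR : b ∉ R := fun hbR =>
    (Finset.mem_insert.1 (hRP hbR)).elim (fun hbh => hhU (hbh ▸ hbU)) hbP
  obtain ⟨μ, hμ, hμm', rfl⟩ := mem_fiber.1 hRF
  have hforce : ∀ g, IsChamber A g → SepSet A c₀ g ⊆ U → b ∈ SepSet A c₀ g → h ∈ J :=
    fun g hg hgU hbg => mem_of_sepSet_sdiff_localization hA hc₀ hX hinc hJ hg hμ hm'J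
      (hgU.trans hUJ) ((Finset.inter_subset_inter_right hgU).trans hm'U) hμm'
      (Finset.mem_sdiff.2 ⟨hhR, hhX⟩) (Finset.mem_sdiff.2 ⟨hbg, hbX⟩) hbR
  rcases Finset.mem_union.1 hbU with hbc | hbd
  · exact hforce c hc Finset.subset_union_left hbc
  · exact hforce d hd Finset.subset_union_right hbd

theorem exists_isLeast_of_localization (hA : IsArrangement A) (hc₀ : IsChamber A c₀)
    (hX : IsModularCoatom A X) (hinc : IncidentSub A c₀ X) {c d m' : V n → Bool}
    (hc : IsChamber A c) (hd : IsChamber A d) (hm' : IsChamber (localization A X) m')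
    (hm'least : IsLeast {J | Is2Closed (localization A X) c₀ J ∧ SepSet (localization A X) c₀ c ∪
      SepSet (localization A X) c₀ d ⊆ J} (SepSet (localization A X) c₀ m')) :
    ∃ m, IsChamber A m ∧
      IsLeast {J | Is2Closed A c₀ J ∧ SepSet A c₀ c ∪ SepSet A c₀ d ⊆ J} (SepSet A c₀ m) := by
  simp only [sepSet_of_subset (localization_subset A X), ← Finset.union_inter_distrib_right]
    at hm'least
  obtain ⟨μ₁, hμ₁, hμ₁m', hμ₁B⟩ := exists_chamber_over hinc hm' true
  have hμ₁F : SepSet A c₀ μ₁ ∈ fiber A c₀ X m' := mem_fiber.2 ⟨μ₁, hμ₁, hμ₁m', rfl⟩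
  obtain ⟨Q, hQF, hUQ, hQleast⟩ := exists_least_of_isChain (isChain_fiber hA hc₀ hX hinc)
    (p := (SepSet A c₀ c ∪ SepSet A c₀ d ⊆ ·)) ⟨_, hμ₁F, fun v hv => by
      by_cases hvX : v ∈ localization A X
      · exact sepSet_inter_localization_subset_of_mem_fiber hμ₁F
          (hm'least.1.2 (Finset.mem_inter.2 ⟨hv, hvX⟩))
      · refine (hμ₁B v (Finset.mem_sdiff.2 ⟨?_, hvX⟩)).2 rfl
        rcases Finset.mem_union.1 hv with h | h <;> exact (mem_sepSet.1 h).1⟩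
  obtain ⟨m, hm, hmm', rfl⟩ := mem_fiber.1 hQF
  refine ⟨m, hm, ⟨is2Closed_sepSet hm, hUQ⟩, fun J ⟨hJ, hUJ⟩ h hh => ?_⟩
  have hm'J : SepSet A c₀ m' ∩ localization A X ⊆ J := fun v hv =>
    (Finset.mem_inter.1 (hm'least.2 ⟨hJ.localization X, Finset.inter_subset_inter_right hUJ⟩
      hv)).1
  by_cases hhX : h ∈ localization A X
  · refine hm'J (Finset.mem_inter.2 ⟨mem_sepSet.2 ⟨(mem_sepSet.1 hh).1, ?_⟩, hhX⟩)
    rw [← hmm' h hhX]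
    exact (mem_sepSet.1 hh).2
  · exact mem_of_mem_least_fiber hA hc₀ hX hinc hc hd hm' hm'least.1.2 hJ hUJ hm'J hQF hQleast
      hh hhX

end Join

lemma eq_empty_of_rankA_eq_zero (hA : IsArrangement A) (h : rankA A = 0) : A = ∅ := by
  refine Finset.eq_empty_of_forall_notMem fun v hv => hA.1 v hv ?_
  have hbot := Submodule.finrank_eq_zero.1 h
  simpa [hbot] using Submodule.subset_span (R := ℝ) hv

theorem exists_isLeast_twoClosed (hA : IsArrangement A) (hc₀ : IsChamber A c₀)
    (hss : ∃ X : Fin (rankA A + 1) → Submodule ℝ (V n),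
      IsModularFlag A X ∧ ∀ i, IncidentSub A c₀ (X i))
    {c d : V n → Bool} (hc : IsChamber A c) (hd : IsChamber A d) :
    ∃ m, IsChamber A m ∧
      IsLeast {J | Is2Closed A c₀ J ∧ SepSet A c₀ c ∪ SepSet A c₀ d ⊆ J} (SepSet A c₀ m) := by
  induction hN : A.card using Nat.strong_induction_on generalizing A with
  | _ N ih =>
  obtain ⟨X, hX, hinc⟩ := hss
  by_cases hr : rankA A = 0
  · obtain rfl := eq_empty_of_rankA_eq_zero hA hr
    exact ⟨c, hc, ⟨is2Closed_sepSet hc, by simp [SepSet]⟩, fun J _ => by simp [SepSet]⟩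
  set i : Fin (rankA A + 1) := ⟨rankA A - 1, by omega⟩
  have hdim : Module.finrank ℝ (X i) + rankA A = n + 1 := by
    have : Module.finrank ℝ (X i) = n - (rankA A - 1) := hX.2.2.2 i
    have := rankA_le A
    omega
  have hrank := finrank_add_rankA_localization (hX.2.1 i).1
  have hcard : (localization A (X i)).card < N := hN ▸ Finset.card_lt_card
    (Finset.ssubset_iff_subset_ne.2 ⟨localization_subset A _, fun h => by rw [h] at hrank; omega⟩)
  obtain ⟨m', hm', hm'least⟩ := ih _ hcard (hA.localization _) (hc₀.mono_s18 (localization_subset A _))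
    (hX.exists_localization hinc i) (hc.mono_s18 (localization_subset A _))
    (hd.mono_s18 (localization_subset A _)) rfl
  exact exists_isLeast_of_localization hA hc₀ ((hX.2.1 i).isModularCoatom hA hdim) (hinc i)
    hc hd hm' hm'least

end Arrangement

theorem supersolvable_join_twoClosure {n : ℕ} (A : Finset (V n)) (hA : IsArrangement A)
    (c₀ : V n → Bool) (hc₀ : IsChamber A c₀)
    (hss : ∃ X : Fin (rankA A + 1) → Submodule ℝ (V n),
      IsModularFlag A X ∧ ∀ i, IncidentSub A c₀ (X i))
    (c d j : V n → Bool) (hc : IsChamber A c) (hd : IsChamber A d) (hj : IsChamber A j)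
    (hubc : SepSet A c₀ c ⊆ SepSet A c₀ j) (hubd : SepSet A c₀ d ⊆ SepSet A c₀ j)
    (hlub : ∀ e, IsChamber A e → SepSet A c₀ c ⊆ SepSet A c₀ e →
      SepSet A c₀ d ⊆ SepSet A c₀ e → SepSet A c₀ j ⊆ SepSet A c₀ e) :
    Is2Closed A c₀ (SepSet A c₀ j) ∧
      SepSet A c₀ c ∪ SepSet A c₀ d ⊆ SepSet A c₀ j ∧
      ∀ J ⊆ A, Is2Closed A c₀ J → SepSet A c₀ c ∪ SepSet A c₀ d ⊆ J →
        SepSet A c₀ j ⊆ J := by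
  refine ⟨Arrangement.is2Closed_sepSet hj, Finset.union_subset hubc hubd, fun J _ hJ hUJ => ?_⟩
  obtain ⟨m, hm, ⟨-, hUm⟩, hmleast⟩ := Arrangement.exists_isLeast_twoClosed hA hc₀ hss hc hd
  exact (hlub m hm (Finset.subset_union_left.trans hUm) (Finset.subset_union_right.trans hUm)).trans
    (hmleast ⟨hJ, hUJ⟩)
end
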